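/- arXiv:1412.5560 — 5 statements merged into one kernel-verified Lean document; each statement's English description precedes it below -/
import Mathlib

section
/- Let k = 2r+1 ≥ 3 be an odd integer and K a field. There exist a k×k skew-symmetric matrix M whose entries are homogeneous linear forms in K[y_0,y_1], and homogeneous forms f_1, …, f_k of degree r in K[y_0,y_1] which span the K-vector space of all homogeneous forms of degree r in K[y_0,y_1], such that for each i with 1 ≤ i ≤ k the determinant of the matrix obtained from M by deleting its i-th row and i-th column equals f_i². -/
open Finset

namespace St3Aux

variable {R : Type*} [CommRing R]

def pathM (n : ℕ) (b : ℕ → R) : Matrix (Fin n) (Fin n) R :=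
  Matrix.of fun i j =>
    if (j : ℕ) = (i : ℕ) + 1 then b i
    else if (i : ℕ) = (j : ℕ) + 1 then -(b j) else 0

lemma pathM_apply_zero (n : ℕ) (b : ℕ → R) (i : Fin (n+1+1)) (hi : i ≠ 1) :
    pathM (n+1+1) b i 0 = 0 := by
  have h0 : ((0 : Fin (n+1+1)) : ℕ) = 0 := rfl
  have h1 : (i : ℕ) ≠ 1 := fun h => hi (Fin.ext (by simp [h]))
  simp only [pathM, Matrix.of_apply, h0]
  rw [if_neg (by omega), if_neg (by omega)]

lemma det_pathM (m : ℕ) (b : ℕ → R) :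
    (pathM (2 * m) b).det = (∏ t ∈ Finset.range m, b (2 * t)) ^ 2 := by
  induction m generalizing b with
  | zero =>
    simp [Matrix.det_fin_zero, show (2*0) = 0 from rfl]
  | succ m ih =>
    show (pathM (2*m+1+1) b).det = _
    rw [Matrix.det_succ_column_zero]
    rw [Finset.sum_eq_single (1 : Fin (2*m+1+1))]
    · have he1 : (pathM (2*m+1+1) b) 1 0 = -(b 0) := by
        simp only [pathM, Matrix.of_apply]
        norm_num
      rw [he1]
      set B := (pathM (2*m+1+1) b).submatrix (Fin.succAbove 1) Fin.succ with hB
      rw [Matrix.det_succ_row_zero]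
      rw [Finset.sum_eq_single (0 : Fin (2*m+1))]
      · have he2 : B 0 0 = b 0 := by
          simp only [hB, Matrix.submatrix_apply, pathM, Matrix.of_apply]
          norm_num [Fin.succAbove]
        rw [he2]
        have hC : B.submatrix Fin.succ (Fin.succAbove 0) = pathM (2*m) (fun t => b (t+2)) := by
          ext i j
          simp only [hB, Matrix.submatrix_apply, pathM, Matrix.of_apply]
          have hr : ((1:Fin (2*m+1+1)).succAbove i.succ : ℕ) = (i:ℕ) + 2 := by
            simp [Fin.succAbove, Fin.lt_def]
          have hc : (((0:Fin (2*m+1)).succAbove j).succ : ℕ) = (j:ℕ) + 2 := by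
            simp [Fin.succAbove, Fin.lt_def]
          rw [hr, hc]
          rcases eq_or_ne (j:ℕ) ((i:ℕ)+1) with h | h
          · rw [if_pos (by omega), if_pos h]
          · rw [if_neg (by omega), if_neg h]
            rcases eq_or_ne (i:ℕ) ((j:ℕ)+1) with h' | h'
            · rw [if_pos (by omega), if_pos h']
            · rw [if_neg (by omega), if_neg h']
        rw [hC, ih]
        rw [Finset.prod_range_succ']
        have h1v : ((1 : Fin (2*m+1+1)) : ℕ) = 1 := rfl
        have h0v : ((0 : Fin (2*m+1)) : ℕ) = 0 := rfl
        have hpe : ∀ t, 2 * (t+1) = 2*t+2 := by omega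
        simp only [h1v, h0v, pow_one, pow_zero, one_mul, hpe]
        ring
      · intro j _ hj
        have : B 0 j = 0 := by
          simp only [hB, Matrix.submatrix_apply, pathM, Matrix.of_apply]
          have h00 : ((1:Fin (2*m+1+1)).succAbove 0 : ℕ) = 0 := by
            simp [Fin.succAbove, Fin.lt_def]
          have hj' : (j : ℕ) ≠ 0 := fun h => hj (Fin.ext (by simp [h]))
          have hjs : ((j.succ : Fin (2*m+1+1)) : ℕ) = (j:ℕ)+1 := by simp
          rw [h00, hjs, if_neg (by omega), if_neg (by omega)]
        rw [this]; ring
      · intro h; exact absurd (Finset.mem_univ _) h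
    · intro i _ hi
      rw [pathM_apply_zero (2*m) b i hi]; ring
    · intro h; exact absurd (Finset.mem_univ _) h

lemma mod_cancel {k c i j : ℕ} (hi : i < k) (hj : j < k) :
    (c + i) % k = (c + j) % k ↔ i = j := by
  constructor
  · intro h
    have h2 : i ≡ j [MOD k] := Nat.ModEq.add_left_cancel (Nat.ModEq.refl c) h
    have h3 : i % k = j % k := h2
    rwa [Nat.mod_eq_of_lt hi, Nat.mod_eq_of_lt hj] at h3
  · rintro rfl; rfl

lemma mod_succ {k c i j : ℕ} (hk : 1 < k) (hi : i + 1 < k) (hj : j < k) :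
    (c + j) % k = ((c + i) % k + 1) % k ↔ j = i + 1 := by
  have h1 : ((c + i) % k + 1) % k = (c + (i+1)) % k := by
    conv_rhs => rw [← Nat.add_assoc, Nat.add_mod (c+i) 1 k, Nat.mod_eq_of_lt hk]
  rw [h1]
  exact mod_cancel hj hi

/-- cycle matrix of odd size `k` with edge weights `a` -/
def cycM (kk : ℕ) (a : ℕ → R) : Matrix (Fin kk) (Fin kk) R :=
  Matrix.of fun x y =>
    if (y : ℕ) = ((x : ℕ) + 1) % kk then a (x : ℕ)
    else if (x : ℕ) = ((y : ℕ) + 1) % kk then -(a (y : ℕ)) else 0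

lemma det_cycM_minor (r : ℕ) (hr : 1 ≤ r) (a : ℕ → R) (p : Fin (2*r+1)) :
    ((cycM (2*r+1) a).submatrix p.succAbove p.succAbove).det
      = (∏ t ∈ Finset.range r, a (((p:ℕ) + 1 + 2*t) % (2*r+1))) ^ 2 := by
  have hkpos : 0 < 2*r+1 := by omega
  set g : Fin (2*r) → Fin (2*r+1) := fun i => ⟨((p:ℕ) + 1 + (i:ℕ)) % (2*r+1), Nat.mod_lt _ hkpos⟩ with hg
  have hgval : ∀ i, ((g i : Fin (2*r+1)) : ℕ) = ((p:ℕ) + 1 + (i:ℕ)) % (2*r+1) := fun i => rfl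
  have hgne : ∀ i, g i ≠ p := by
    intro i h
    have hv : ((p:ℕ) + (1 + (i:ℕ))) % (2*r+1) = ((p:ℕ) + 0) % (2*r+1) := by
      have := congrArg Fin.val h
      rw [hgval] at this
      rw [← Nat.add_assoc, this]
      simp [Nat.mod_eq_of_lt p.isLt]
    have := (mod_cancel (by omega) (by omega)).mp hv
    omega
  have hginj : Function.Injective g := by
    intro i j h
    have hv : ((p:ℕ)+1 + (i:ℕ)) % (2*r+1) = ((p:ℕ)+1 + (j:ℕ)) % (2*r+1) := congrArg Fin.val h
    exact Fin.ext ((mod_cancel (by omega) (by omega)).mp hv)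
  -- build the equiv
  have hex : ∀ i, ∃ z, p.succAbove z = g i := fun i => Fin.exists_succAbove_eq (hgne i)
  choose σ0 hσ0 using hex
  have hσinj : Function.Injective σ0 := by
    intro i j h
    apply hginj
    rw [← hσ0, ← hσ0, h]
  have hσbij : Function.Bijective σ0 := (Finite.injective_iff_bijective).mp hσinj
  let e : Fin (2*r) ≃ Fin (2*r) := Equiv.ofBijective σ0 hσbij
  have h1 : ((cycM (2*r+1) a).submatrix p.succAbove p.succAbove).det
      = (((cycM (2*r+1) a).submatrix p.succAbove p.succAbove).submatrix e e).det :=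
    (Matrix.det_submatrix_equiv_self e _).symm
  rw [h1, Matrix.submatrix_submatrix]
  have h2 : (p.succAbove ∘ e) = g := by
    funext i
    exact hσ0 i
  rw [h2]
  have h3 : (cycM (2*r+1) a).submatrix g g = pathM (2*r) (fun t => a (((p:ℕ)+1+t) % (2*r+1))) := by
    ext i j
    simp only [Matrix.submatrix_apply, cycM, pathM, Matrix.of_apply, hgval]
    have hcond1 : (((p:ℕ)+1+(j:ℕ)) % (2*r+1) = (((p:ℕ)+1+(i:ℕ)) % (2*r+1) + 1) % (2*r+1)) ↔ ((j:ℕ) = (i:ℕ)+1) :=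
      mod_succ (by omega) (by omega) (by omega)
    have hcond2 : (((p:ℕ)+1+(i:ℕ)) % (2*r+1) = (((p:ℕ)+1+(j:ℕ)) % (2*r+1) + 1) % (2*r+1)) ↔ ((i:ℕ) = (j:ℕ)+1) :=
      mod_succ (by omega) (by omega) (by omega)
    rcases eq_or_ne (j:ℕ) ((i:ℕ)+1) with h | h
    · rw [if_pos (hcond1.mpr h), if_pos h]
    · rw [if_neg (fun hc => h (hcond1.mp hc)), if_neg h]
      rcases eq_or_ne (i:ℕ) ((j:ℕ)+1) with h' | h'
      · rw [if_pos (hcond2.mpr h'), if_pos h']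
      · rw [if_neg (fun hc => h' (hcond2.mp hc)), if_neg h']
  rw [h3, det_pathM]

end St3Aux


open St3Aux MvPolynomial

/-- For odd `k = 2r+1 ≥ 3` and a field `K`, there exist a `k × k` skew-symmetric matrix `M`
of homogeneous linear forms in `K[y₀,y₁]` and homogeneous forms `f₁, …, f_k` of degree `r`
spanning the space of all degree-`r` forms, such that deleting the `i`-th row and column of
`M` yields a matrix whose determinant is `f_i²`. -/
theorem statement3 (K : Type*) [Field K] (r : ℕ) (hr : 1 ≤ r) :
    ∃ (M : Matrix (Fin (2 * r + 1)) (Fin (2 * r + 1)) (MvPolynomial (Fin 2) K))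
      (f : Fin (2 * r + 1) → MvPolynomial (Fin 2) K),
      M.transpose = -M ∧
      (∀ p q, (M p q).IsHomogeneous 1) ∧
      (∀ p, (f p).IsHomogeneous r) ∧
      Submodule.span K (Set.range f) = MvPolynomial.homogeneousSubmodule (Fin 2) K r ∧
      (∀ p : Fin (2 * r + 1),
        ((M.submatrix p.succAbove p.succAbove).det = (f p) ^ 2)) := by
  set a : ℕ → MvPolynomial (Fin 2) K := fun q => if q % 2 = 0 then X 0 else X 1 with ha
  have haH : ∀ q, (a q).IsHomogeneous 1 := by
    intro q
    simp only [ha]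
    split
    · exact isHomogeneous_X K 0
    · exact isHomogeneous_X K 1
  refine ⟨cycM (2*r+1) a, fun p => ∏ t ∈ Finset.range r, a (((p:ℕ) + 1 + 2*t) % (2*r+1)),
    ?_, ?_, ?_, ?_, ?_⟩
  · -- skew-symmetry
    ext x y
    simp only [Matrix.transpose_apply, Matrix.neg_apply, cycM, Matrix.of_apply]
    have hxk : (x:ℕ) < 2*r+1 := x.isLt
    have hyk : (y:ℕ) < 2*r+1 := y.isLt
    have hnb : ¬ ((x:ℕ) = ((y:ℕ)+1) % (2*r+1) ∧ (y:ℕ) = ((x:ℕ)+1) % (2*r+1)) := by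
      rintro ⟨h1, h2⟩
      rw [h2] at h1
      -- x = ((x+1)%k + 1)%k = (x+2)%k
      have h3 : (((x:ℕ)+1) % (2*r+1) + 1) % (2*r+1) = ((x:ℕ)+2) % (2*r+1) := by
        conv_rhs => rw [show (x:ℕ)+2 = ((x:ℕ)+1)+1 from rfl,
          Nat.add_mod ((x:ℕ)+1) 1 (2*r+1), Nat.mod_eq_of_lt (show (1:ℕ) < 2*r+1 by omega)]
      rw [h3] at h1
      rcases Nat.lt_or_ge ((x:ℕ)+2) (2*r+1) with hlt | hge
      · rw [Nat.mod_eq_of_lt hlt] at h1; omega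
      · have : ((x:ℕ)+2) % (2*r+1) = (x:ℕ)+2 - (2*r+1) := by
          rw [Nat.mod_eq_sub_mod hge, Nat.mod_eq_of_lt (by omega)]
        rw [this] at h1; omega
    rcases eq_or_ne (x:ℕ) (((y:ℕ)+1) % (2*r+1)) with h1 | h1
    · have h2 : ¬ ((y:ℕ) = ((x:ℕ)+1) % (2*r+1)) := fun h2 => hnb ⟨h1, h2⟩
      rw [if_pos h1, if_neg h2, if_pos h1, neg_neg]
    · rw [if_neg h1]
      rcases eq_or_ne (y:ℕ) (((x:ℕ)+1) % (2*r+1)) with h2 | h2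
      · rw [if_pos h2, if_pos h2]
      · rw [if_neg h2, if_neg h2, if_neg h1, neg_zero]
  · -- entries homogeneous of degree 1
    intro p q
    simp only [cycM, Matrix.of_apply]
    split
    · exact haH _
    · split
      · exact (haH _).neg
      · exact isHomogeneous_zero _ _ _
  · -- f homogeneous of degree r
    intro p
    have := MvPolynomial.IsHomogeneous.prod (Finset.range r)
      (fun t => a (((p:ℕ) + 1 + 2*t) % (2*r+1))) (fun _ => 1) (fun t _ => haH _)
    simpa using this
  · -- span
    have fval : ∀ j : ℕ, j ≤ r →
        (∏ t ∈ Finset.range r, a ((2*j + 1 + 2*t) % (2*r+1)))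
          = X 1 ^ (r - j) * X 0 ^ j := by
      intro j hj
      calc ∏ t ∈ Finset.range r, a ((2*j + 1 + 2*t) % (2*r+1))
          = ∏ t ∈ Finset.range ((r-j)+j), a ((2*j + 1 + 2*t) % (2*r+1)) := by
            rw [Nat.sub_add_cancel hj]
        _ = (∏ t ∈ Finset.range (r-j), a ((2*j + 1 + 2*t) % (2*r+1)))
              * ∏ t ∈ Finset.range j, a ((2*j + 1 + 2*((r-j) + t)) % (2*r+1)) :=
            Finset.prod_range_add _ _ _
        _ = X 1 ^ (r - j) * X 0 ^ j := by
            congr 1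
            · rw [Finset.prod_congr rfl (fun t ht => ?_), Finset.prod_const,
                Finset.card_range]
              have ht' : t < r - j := Finset.mem_range.mp ht
              rw [Nat.mod_eq_of_lt (by omega)]
              simp only [ha]
              rw [if_neg (by omega)]
            · rw [Finset.prod_congr rfl (fun t ht => ?_), Finset.prod_const,
                Finset.card_range]
              have ht' : t < j := Finset.mem_range.mp ht
              rw [show 2*j + 1 + 2*((r-j) + t) = (2*r+1) + 2*t by omega,
                Nat.add_mod_left, Nat.mod_eq_of_lt (by omega)]
              simp only [ha]
              rw [if_pos (by omega)]
    apply le_antisymm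
    · rw [Submodule.span_le]
      rintro _ ⟨p, rfl⟩
      rw [SetLike.mem_coe, mem_homogeneousSubmodule]
      have := MvPolynomial.IsHomogeneous.prod (Finset.range r)
        (fun t => a (((p:ℕ) + 1 + 2*t) % (2*r+1))) (fun _ => 1) (fun t _ => haH _)
      simpa using this
    · intro φ hφ
      rw [mem_homogeneousSubmodule] at hφ
      rw [← support_sum_monomial_coeff φ]
      apply Submodule.sum_mem
      intro d hd
      have hdr : d 0 + d 1 = r := by
        have := hφ (MvPolynomial.mem_support_iff.mp hd)
        rw [Finsupp.weight_apply, Finsupp.sum_fintype] at this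
        · simpa [Fin.sum_univ_two] using this
        · simp
      have hmono : (monomial d) (coeff d φ)
          = (coeff d φ) • (X 0 ^ d 0 * X 1 ^ d 1 : MvPolynomial (Fin 2) K) := by
        have hm1 : (monomial d (1:K)) = X 0 ^ d 0 * X 1 ^ d 1 := by
          rw [MvPolynomial.monomial_eq, map_one, one_mul, Finsupp.prod_fintype]
          · exact Fin.prod_univ_two _
          · intro i; exact pow_zero _
        rw [← hm1, smul_monomial, smul_eq_mul, mul_one]
      rw [hmono]
      apply Submodule.smul_mem
      apply Submodule.subset_span
      refine ⟨⟨2*(d 0), by omega⟩, ?_⟩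
      show (∏ t ∈ Finset.range r, a ((2*(d 0) + 1 + 2*t) % (2*r+1)))
        = X 0 ^ d 0 * X 1 ^ d 1
      rw [fval (d 0) (by omega), show r - d 0 = d 1 by omega, mul_comm]
  · -- determinant of minors
    intro p
    exact det_cycM_minor r hr a p
end

section
/- Let V be a vector space of dimension 2m (m ≥ 2) over an algebraically closed field K of characteristic zero, and let L_1, …, L_m be 2-dimensional subspaces with V = L_1 ⊕ ⋯ ⊕ L_m. For each i, let H_i be a nonzero alternating bilinear form on V with rad(H_i) ⊇ ⊕_{j≠i} L_j; set σ = span(H_1, …, H_m) and, for each i, F_i = span(H_j : j ≠ i), subspaces of the space of alternating bilinear forms on V. Then for a 2-dimensional subspace N of the space of alternating bilinear forms on V, the following are equivalent: (i) N ⊆ σ and N ∩ F_i ∩ F_j = {0} for all 1 ≤ i < j ≤ m; (ii) every nonzero A ∈ N has dim rad(A) ≤ 2, and the set of nonzero radicals {rad(A) : A ∈ N, A ≠ 0, rad(A) ≠ 0} is exactly {L_1, …, L_m}. -/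
/-!
Each `Hᵢ` is a symplectic form on the plane `Lᵢ` and vanishes as soon as one argument lies in
another block, so a combination `∑ cₖ Hₖ` is block diagonal with radical `⨁_{cₖ = 0} Lₖ`, and it
lies in `Fᵢ ∩ Fⱼ` when `cᵢ = cⱼ = 0`. Under (i) every nonzero form in `N` therefore has at most
one vanishing coefficient, i.e. radical `0` or some `Lᵢ`; each `Lᵢ` occurs because, for
`eᵢ, fᵢ ∈ Lᵢ` with `Hᵢ(eᵢ, fᵢ) ≠ 0`, the functional `A ↦ A(eᵢ, fᵢ)` has a nonzero kernel on the
plane `N`. Under (ii), for `i ≠ j` the plane `N` is spanned by forms with radicals `Lᵢ` and `Lⱼ`,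
so every form in `N` is block diagonal, hence a combination of the `Hₖ` (on the plane `Lₖ` it is
a multiple of `Hₖ`); a nonzero form in `Fᵢ ∩ Fⱼ` would have the `4`-dimensional radical
`Lᵢ ⊕ Lⱼ`.
-/

open Module Submodule

namespace LinearMap.IsAlt

variable {K V : Type*} [Field K] [AddCommGroup V] [Module K V] {A B : V →ₗ[K] V →ₗ[K] K}

theorem apply_smul_add_smul (hB : B.IsAlt) (a b a' b' : K) (x y : V) :
    B (a • x + b • y) (a' • x + b' • y) = (a * b' - b * a') * B x y := by
  simp only [map_add, map_smul, add_apply, smul_apply, smul_eq_mul, hB.self_eq_zero,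
    ← hB.neg x y]
  ring

theorem eq_zero_of_mem_span_pair (hB : B.IsAlt) {x y u : V} (hxy : B x y ≠ 0)
    (hu : u ∈ span K {x, y}) (hux : B u x = 0) (huy : B u y = 0) : u = 0 := by
  obtain ⟨a, b, rfl⟩ := mem_span_pair.1 hu
  have ha := hB.apply_smul_add_smul a b 0 1 x y
  have hb := hB.apply_smul_add_smul a b 1 0 x y
  simp only [zero_smul, one_smul, zero_add, add_zero] at ha hb
  rw [huy, eq_comm, mul_eq_zero, mul_one, mul_zero, sub_zero] at ha
  rw [hux, eq_comm, mul_eq_zero, mul_one, mul_zero, zero_sub, neg_eq_zero] at hb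
  rw [ha.resolve_right hxy, hb.resolve_right hxy, zero_smul, zero_smul, add_zero]

theorem apply_eq_div_mul_of_mem_span_pair (hA : A.IsAlt) (hB : B.IsAlt) {x y u v : V}
    (hxy : B x y ≠ 0) (hu : u ∈ span K {x, y}) (hv : v ∈ span K {x, y}) :
    A u v = A x y / B x y * B u v := by
  obtain ⟨a, b, rfl⟩ := mem_span_pair.1 hu
  obtain ⟨a', b', rfl⟩ := mem_span_pair.1 hv
  rw [hA.apply_smul_add_smul, hB.apply_smul_add_smul]
  field_simp

end LinearMap.IsAlt

theorem Submodule.span_pair_eq_of_finrank_eq_two {K V : Type*} [Field K] [AddCommGroup V]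
    [Module K V] {P : Submodule K V} (hP : finrank K P = 2) {x y : V} (hx : x ∈ P) (hy : y ∈ P)
    (hx0 : x ≠ 0) (hxy : ∀ a : K, a • x ≠ y) : span K {x, y} = P := by
  have : FiniteDimensional K P := Module.finite_of_finrank_eq_succ hP
  refine eq_of_le_of_finrank_eq (span_le.2 (Set.insert_subset hx (Set.singleton_subset_iff.2 hy)))
    ?_
  rw [hP, ← Matrix.range_cons_cons_empty,
    finrank_span_eq_card ((LinearIndependent.pair_iff' hx0).2 hxy), Fintype.card_fin]

theorem Submodule.exists_mem_ne_zero_apply_eq_zero {K M : Type*} [Field K] [AddCommGroup M]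
    [Module K M] {N : Submodule K M} (hN : 1 < finrank K N) (φ : M →ₗ[K] K) :
    ∃ A ∈ N, A ≠ 0 ∧ φ A = 0 := by
  have : FiniteDimensional K N := Module.finite_of_finrank_pos (zero_lt_one.trans hN)
  obtain ⟨A, hA, hA0⟩ := exists_mem_ne_zero_of_ne_bot
    (LinearMap.ker_ne_bot_of_finrank_lt (f := φ ∘ₗ N.subtype) (by rwa [finrank_self]))
  exact ⟨A, A.2, fun h => hA0 (Subtype.ext h), hA⟩

theorem Submodule.finrank_sup_of_disjoint {K V : Type*} [Field K] [AddCommGroup V] [Module K V]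
    [FiniteDimensional K V] {P Q : Submodule K V} (h : Disjoint P Q) :
    finrank K ↥(P ⊔ Q) = finrank K P + finrank K Q := by
  rw [← finrank_sup_add_finrank_inf_eq, h.eq_bot, finrank_bot, add_zero]

namespace LinearMap

variable {K V W ι : Type*} [Field K] [AddCommGroup V] [Module K V] [AddCommGroup W] [Module K W]
  {L : ι → Submodule K V}

theorem ext_of_iSup_eq_top (hL : ⨆ i, L i = ⊤) {f g : V →ₗ[K] W}
    (h : ∀ i, ∀ v ∈ L i, f v = g v) : f = g :=
  ext_on (s := ⋃ i, (L i : Set V)) (by rw [← iSup_eq_span, hL]) fun v hv => by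
    obtain ⟨i, hi⟩ := Set.mem_iUnion.1 hv
    exact h i v hi

theorem ext₂_of_iSup_eq_top (hL : ⨆ i, L i = ⊤) {A B : V →ₗ[K] V →ₗ[K] W}
    (h : ∀ i j, ∀ u ∈ L i, ∀ v ∈ L j, A u v = B u v) : A = B :=
  ext_of_iSup_eq_top hL fun i u hu => ext_of_iSup_eq_top hL fun j v hv => h i j u hu v hv

end LinearMap

section Blocks

open LinearMap

variable {K V ι : Type*} [Field K] [AddCommGroup V] [Module K V]
  {L : ι → Submodule K V} {H : ι → V →ₗ[K] V →ₗ[K] K} {N : Submodule K (V →ₗ[K] V →ₗ[K] K)}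

theorem le_ker_of_mem_span_image_ne (hHker : ∀ i j, j ≠ i → L j ≤ ker (H i)) {i : ι}
    {T : V →ₗ[K] V →ₗ[K] K} (hT : T ∈ span K (H '' {k | k ≠ i})) : L i ≤ ker T := by
  induction hT using span_induction with
  | mem T hT =>
    obtain ⟨k, hk, rfl⟩ := hT
    exact hHker k i (Ne.symm hk)
  | zero => simp
  | add T T' _ _ hT hT' => exact fun v hv => by simp [mem_ker.1 (hT hv), mem_ker.1 (hT' hv)]
  | smul a T _ hT => exact fun v hv => by simp [mem_ker.1 (hT hv)]

theorem exists_pair_apply_ne_zero (hsup : ⨆ i, L i = ⊤) (hHalt : ∀ i, (H i).IsAlt)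
    (hHker : ∀ i j, j ≠ i → L j ≤ ker (H i)) {i : ι} (hHne : H i ≠ 0) :
    ∃ x ∈ L i, ∃ y ∈ L i, H i x y ≠ 0 := by
  by_contra! h
  refine hHne (ext₂_of_iSup_eq_top hsup fun k l u hu v hv => ?_)
  by_cases hk : k = i
  · by_cases hl : l = i
    · subst hk hl
      exact h u hu v hv
    · simp [← (hHalt i).neg v u, mem_ker.1 (hHker i l hl hv)]
  · simp [mem_ker.1 (hHker i k hk hu)]

theorem exists_span_pair_eq (hsup : ⨆ i, L i = ⊤) (hHalt : ∀ i, (H i).IsAlt)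
    (hHker : ∀ i j, j ≠ i → L j ≤ ker (H i)) (hL : ∀ i, finrank K (L i) = 2)
    (hHne : ∀ i, H i ≠ 0) :
    ∃ e f : ι → V, (∀ i, span K {e i, f i} = L i) ∧ ∀ i, H i (e i) (f i) ≠ 0 := by
  choose e he f hf hef using fun i => exists_pair_apply_ne_zero hsup hHalt hHker (hHne i)
  refine ⟨e, f, fun i => span_pair_eq_of_finrank_eq_two (hL i) (he i) (hf i) (fun h => ?_)
    (fun a h => ?_), hef⟩
  · exact hef i (by rw [h, map_zero, LinearMap.zero_apply])
  · exact hef i (by rw [← h, map_smul, (hHalt i).self_eq_zero, smul_zero])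

set_option maxHeartbeats 400000 in
theorem apply_eq_zero_of_mem_ker_of_finrank_eq_two (hN2 : finrank K N = 2)
    {A A' B : V →ₗ[K] V →ₗ[K] K} (hA : A ∈ N) (hA' : A' ∈ N) (hA0 : A ≠ 0) (hA'0 : A' ≠ 0)
    (hker : ker A ≠ ker A') (hA'alt : A'.IsAlt) (hB : B ∈ N)
    {u v : V} (hu : u ∈ ker A) (hv : v ∈ ker A') : B u v = 0 := by
  have hspan := span_pair_eq_of_finrank_eq_two (K := K) (V := V →ₗ[K] V →ₗ[K] K) (P := N) hN2
    hA hA' hA0 fun a ha => by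
      subst ha
      have ha0 : a ≠ 0 := by
        rintro rfl
        exact hA'0 (zero_smul K A)
      exact hker (ker_smul _ _ ha0).symm
  rw [← hspan] at hB
  obtain ⟨a, b, rfl⟩ := mem_span_pair.1 hB
  rw [LinearMap.add_apply, LinearMap.add_apply, LinearMap.smul_apply, LinearMap.smul_apply,
    LinearMap.smul_apply, LinearMap.smul_apply, mem_ker.1 hu, ← hA'alt.neg v u, mem_ker.1 hv]
  simp

theorem apply_eq_zero_of_exists_ker_eq [FiniteDimensional K V] (hL : ∀ i, finrank K (L i) = 2)
    (hdisj : Pairwise fun i j => Disjoint (L i) (L j)) (hNalt : ∀ A ∈ N, A.IsAlt)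
    (hN2 : finrank K N = 2) (hrad : ∀ i, ∃ A ∈ N, A ≠ 0 ∧ ker A = L i)
    {B : V →ₗ[K] V →ₗ[K] K} (hB : B ∈ N) {i j : ι} (hij : i ≠ j) {u v : V} (hu : u ∈ L i)
    (hv : v ∈ L j) : B u v = 0 := by
  obtain ⟨A, hA, hA0, hAker⟩ := hrad i
  obtain ⟨A', hA', hA'0, hA'ker⟩ := hrad j
  refine apply_eq_zero_of_mem_ker_of_finrank_eq_two hN2 hA hA' hA0 hA'0 (fun h => ?_)
    (hNalt A' hA') hB (hAker ▸ hu) (hA'ker ▸ hv)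
  have h4 := finrank_sup_of_disjoint (hdisj hij)
  rw [← hAker, ← hA'ker, h, sup_idem, hA'ker, hL j] at h4
  omega

variable [Fintype ι]

theorem sum_smul_apply_of_mem (hHker : ∀ i j, j ≠ i → L j ≤ ker (H i)) (c : ι → K) {j : ι}
    {u : V} (hu : u ∈ L j) : (∑ k, c k • H k) u = c j • H j u := by
  rw [LinearMap.sum_apply, Finset.sum_eq_single j (fun k _ hk => ?_) (by simp)]
  · rfl
  · rw [LinearMap.smul_apply, hHker k j (Ne.symm hk) hu, smul_zero]

theorem sum_smul_mem_span_image_ne (c : ι → K) {i : ι} (hci : c i = 0) :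
    ∑ k, c k • H k ∈ span K (H '' {k | k ≠ i}) := by
  refine sum_mem fun k _ => ?_
  by_cases hk : k = i
  · rw [hk, hci, zero_smul]
    exact zero_mem _
  · exact smul_mem _ _ (subset_span ⟨k, hk, rfl⟩)

theorem sum_smul_apply_apply_of_mem (hHalt : ∀ i, (H i).IsAlt)
    (hHker : ∀ i j, j ≠ i → L j ≤ ker (H i)) (c : ι → K) (u : V) {j : ι} {v : V}
    (hv : v ∈ L j) : (∑ k, c k • H k) u v = c j * H j u v := by
  have hsum : (∑ k, c k • H k).IsAlt := fun w => by
    simp [LinearMap.sum_apply, fun k => (hHalt k).self_eq_zero w]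
  rw [← hsum.neg, sum_smul_apply_of_mem hHker c hv, ← (hHalt j).neg, LinearMap.smul_apply,
    smul_eq_mul, mul_neg]

theorem exists_sum_smul_mem_ne_zero_coeff_eq_zero (hHalt : ∀ i, (H i).IsAlt)
    (hHker : ∀ i j, j ≠ i → L j ≤ ker (H i)) (hσ : N ≤ span K (Set.range H))
    (hN2 : finrank K N = 2) {i : ι} {x y : V} (hy : y ∈ L i) (hxy : H i x y ≠ 0) :
    ∃ c : ι → K, ∑ k, c k • H k ∈ N ∧ ∑ k, c k • H k ≠ 0 ∧ c i = 0 := by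
  obtain ⟨A, hA, hA0, hAxy⟩ :=
    exists_mem_ne_zero_apply_eq_zero (M := V →ₗ[K] V →ₗ[K] K) (hN2 ▸ one_lt_two)
      (applyₗ y ∘ₗ applyₗ x)
  obtain ⟨c, rfl⟩ := (mem_span_range_iff_exists_fun K).1 (hσ hA)
  refine ⟨c, hA, hA0, ?_⟩
  rw [comp_apply, applyₗ_apply_apply, applyₗ_apply_apply,
    sum_smul_apply_apply_of_mem hHalt hHker c x hy] at hAxy
  exact (mul_eq_zero.1 hAxy).resolve_right hxy

theorem eq_of_sum_smul_mem_of_coeff_eq_zero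
    (hF : ∀ i j, i ≠ j → N ⊓ span K (H '' {k | k ≠ i}) ⊓ span K (H '' {k | k ≠ j}) = ⊥)
    {c : ι → K} (hN : ∑ k, c k • H k ∈ N) (h0 : ∑ k, c k • H k ≠ 0) {i j : ι} (hi : c i = 0)
    (hj : c j = 0) : i = j := by
  by_contra hij
  refine h0 ((mem_bot K).1 ?_)
  rw [← hF i j hij]
  exact ⟨⟨hN, sum_smul_mem_span_image_ne c hi⟩, sum_smul_mem_span_image_ne c hj⟩

variable (hsup : ⨆ i, L i = ⊤) (hHalt : ∀ i, (H i).IsAlt)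
  (hHker : ∀ i j, j ≠ i → L j ≤ ker (H i)) {e f : ι → V} (hspan : ∀ i, span K {e i, f i} = L i)
  (hef : ∀ i, H i (e i) (f i) ≠ 0)
include hsup hHalt hHker hspan hef

theorem ker_sum_smul (c : ι → K) : ker (∑ k, c k • H k) = ⨆ (k) (_ : c k = 0), L k := by
  refine le_antisymm (fun v hv => ?_) (iSup₂_le fun k hk u hu => ?_)
  · obtain ⟨μ, rfl⟩ := (mem_iSup_finset_iff_exists_sum (s := Finset.univ) L v).1
        (by simp only [Finset.mem_univ, iSup_pos, hsup, mem_top])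
    refine sum_mem fun k _ => ?_
    by_cases hk : c k = 0
    · exact mem_iSup_of_mem k (mem_iSup_of_mem hk (μ k).2)
    have hHk : H k (∑ l, (μ l : V)) = H k (μ k) := by
      rw [map_sum, Finset.sum_eq_single k (fun l _ hl => hHker k l hl (μ l).2) (by simp)]
    have hvanish : ∀ w ∈ L k, H k (μ k) w = 0 := fun w hw => by
      have := congr($hv w)
      rwa [sum_smul_apply_apply_of_mem hHalt hHker c _ hw, hHk, LinearMap.zero_apply,
        mul_eq_zero, or_iff_right hk] at this
    rw [(hHalt k).eq_zero_of_mem_span_pair (hef k) ((hspan k).symm ▸ (μ k).2)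
      (hvanish _ (hspan k ▸ subset_span (by simp))) (hvanish _ (hspan k ▸ subset_span (by simp)))]
    exact zero_mem _
  · rw [mem_ker, sum_smul_apply_of_mem hHker c hu, hk, zero_smul]

theorem ker_sum_smul_eq_bot {c : ι → K} (hc : ∀ k, c k ≠ 0) : ker (∑ k, c k • H k) = ⊥ := by
  simp [ker_sum_smul hsup hHalt hHker hspan hef, hc]

theorem ker_sum_smul_eq_of_unique {c : ι → K} {i : ι} (hci : c i = 0)
    (hc : ∀ k, c k = 0 → k = i) : ker (∑ k, c k • H k) = L i := by
  rw [ker_sum_smul hsup hHalt hHker hspan hef]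
  exact le_antisymm (iSup₂_le fun k hk => hc k hk ▸ le_rfl) (le_iSup₂ (f := fun k _ => L k) i hci)

theorem mem_span_range_of_apply_eq_zero {B : V →ₗ[K] V →ₗ[K] K} (hB : B.IsAlt)
    (hblock : ∀ i j, i ≠ j → ∀ u ∈ L i, ∀ v ∈ L j, B u v = 0) : B ∈ span K (Set.range H) := by
  refine (mem_span_range_iff_exists_fun K).2 ⟨fun k => B (e k) (f k) / H k (e k) (f k), ?_⟩
  refine ext₂_of_iSup_eq_top hsup fun i j u hu v hv => ?_
  rw [sum_smul_apply_apply_of_mem hHalt hHker _ u hv]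
  by_cases hij : i = j
  · subst hij
    rw [← hspan i] at hu hv
    exact (hB.apply_eq_div_mul_of_mem_span_pair (hHalt i) (hef i) hu hv).symm
  · rw [hblock i j hij u hu v hv, hHker j i hij hu, LinearMap.zero_apply, mul_zero]

theorem ker_eq_bot_or_exists_eq_of_le_span (hσ : N ≤ span K (Set.range H))
    (hF : ∀ i j, i ≠ j → N ⊓ span K (H '' {k | k ≠ i}) ⊓ span K (H '' {k | k ≠ j}) = ⊥)
    {A : V →ₗ[K] V →ₗ[K] K} (hA : A ∈ N) (hA0 : A ≠ 0) : ker A = ⊥ ∨ ∃ i, ker A = L i := by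
  obtain ⟨c, rfl⟩ := (mem_span_range_iff_exists_fun K).1 (hσ hA)
  by_cases h : ∃ i, c i = 0
  · obtain ⟨i, hi⟩ := h
    exact Or.inr ⟨i, ker_sum_smul_eq_of_unique hsup hHalt hHker hspan hef hi
      fun k hk => eq_of_sum_smul_mem_of_coeff_eq_zero hF hA hA0 hk hi⟩
  · exact Or.inl (ker_sum_smul_eq_bot hsup hHalt hHker hspan hef (not_exists.1 h))

theorem radicals_eq_range_of_le_span (hL : ∀ i, finrank K (L i) = 2) (hN2 : finrank K N = 2)
    (hσ : N ≤ span K (Set.range H))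
    (hF : ∀ i j, i ≠ j → N ⊓ span K (H '' {k | k ≠ i}) ⊓ span K (H '' {k | k ≠ j}) = ⊥) :
    (∀ A ∈ N, A ≠ 0 → finrank K (ker A) ≤ 2) ∧
      {W : Submodule K V | ∃ A ∈ N, A ≠ 0 ∧ ker A ≠ ⊥ ∧ ker A = W} = Set.range L := by
  have hker := fun A (hA : A ∈ N) hA0 =>
    ker_eq_bot_or_exists_eq_of_le_span hsup hHalt hHker hspan hef hσ hF hA hA0
  refine ⟨fun A hA hA0 => ?_, Set.ext fun W => ⟨?_, ?_⟩⟩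
  · rcases hker A hA hA0 with h | ⟨i, h⟩ <;> rw [h]
    · simp
    · exact (hL i).le
  · rintro ⟨A, hA, hA0, hbot, rfl⟩
    exact ((hker A hA hA0).resolve_left hbot).imp fun i h => h.symm
  · rintro ⟨i, rfl⟩
    obtain ⟨c, hcN, hc0, hci⟩ := exists_sum_smul_mem_ne_zero_coeff_eq_zero hHalt hHker hσ hN2
      (hspan i ▸ subset_span (by simp)) (hef i)
    have hker_eq := ker_sum_smul_eq_of_unique hsup hHalt hHker hspan hef hci
      fun k hk => eq_of_sum_smul_mem_of_coeff_eq_zero hF hcN hc0 hk hci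
    refine ⟨_, hcN, hc0, fun h => ?_, hker_eq⟩
    have h2 := hL i
    rw [← hker_eq, h, finrank_bot] at h2
    omega

theorem le_span_of_radicals_eq_range [FiniteDimensional K V] (hL : ∀ i, finrank K (L i) = 2)
    (hdisj : Pairwise fun i j => Disjoint (L i) (L j)) (hNalt : ∀ A ∈ N, A.IsAlt)
    (hN2 : finrank K N = 2) (hdim : ∀ A ∈ N, A ≠ 0 → finrank K (ker A) ≤ 2)
    (hrad : {W : Submodule K V | ∃ A ∈ N, A ≠ 0 ∧ ker A ≠ ⊥ ∧ ker A = W} = Set.range L) :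
    N ≤ span K (Set.range H) ∧
      ∀ i j, i ≠ j → N ⊓ span K (H '' {k | k ≠ i}) ⊓ span K (H '' {k | k ≠ j}) = ⊥ := by
  have hker : ∀ i, ∃ A ∈ N, A ≠ 0 ∧ ker A = L i := fun i => by
    obtain ⟨A, hA, hA0, -, hAi⟩ : L i ∈ {W : Submodule K V | ∃ A ∈ N, A ≠ 0 ∧ ker A ≠ ⊥ ∧
      ker A = W} := hrad ▸ ⟨i, rfl⟩
    exact ⟨A, hA, hA0, hAi⟩
  refine ⟨fun B hB => mem_span_range_of_apply_eq_zero hsup hHalt hHker hspan hef (hNalt B hB)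
    fun i j hij u hu v hv => apply_eq_zero_of_exists_ker_eq hL hdisj hNalt hN2 hker hB hij hu hv,
    fun i j hij => eq_bot_iff.2 fun B ⟨⟨hB, hBi⟩, hBj⟩ => (mem_bot K).2 ?_⟩
  by_contra hB0
  have hle := finrank_mono (sup_le (le_ker_of_mem_span_image_ne hHker hBi)
    (le_ker_of_mem_span_image_ne hHker hBj))
  rw [finrank_sup_of_disjoint (hdisj hij), hL i, hL j] at hle
  have := hdim B hB hB0
  omega

end Blocks

theorem statement12_general (K : Type*) [Field K]
    (V : Type*) [AddCommGroup V] [Module K V] [FiniteDimensional K V]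
    (m : ℕ)
    (L : Fin m → Submodule K V) (hL : ∀ i, Module.finrank K (L i) = 2)
    (hdirect : DirectSum.IsInternal L)
    (H : Fin m → (V →ₗ[K] V →ₗ[K] K)) (hHne : ∀ i, H i ≠ 0)
    (hHalt : ∀ i, ∀ v, H i v v = 0)
    (hHrad : ∀ i, (⨆ (j : Fin m) (_ : j ≠ i), L j) ≤ LinearMap.ker (H i))
    (N : Submodule K (V →ₗ[K] V →ₗ[K] K))
    (hNalt : ∀ A ∈ N, ∀ v, A v v = 0) (hN2 : Module.finrank K N = 2) :
    (N ≤ Submodule.span K (Set.range H) ∧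
      ∀ i j : Fin m, i ≠ j →
        N ⊓ Submodule.span K (H '' {k | k ≠ i}) ⊓ Submodule.span K (H '' {k | k ≠ j}) = ⊥)
    ↔
    ((∀ A ∈ N, A ≠ 0 → Module.finrank K (LinearMap.ker A) ≤ 2) ∧
      {W : Submodule K V | ∃ A ∈ N, A ≠ 0 ∧ LinearMap.ker A ≠ ⊥ ∧ LinearMap.ker A = W} =
        Set.range L) := by
  have hsup := hdirect.submodule_iSup_eq_top
  have hHker : ∀ i j, j ≠ i → L j ≤ LinearMap.ker (H i) := fun i j hj =>
    (le_iSup₂ (f := fun j (_ : j ≠ i) => L j) j hj).trans (hHrad i)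
  obtain ⟨e, f, hspan, hef⟩ := exists_span_pair_eq hsup hHalt hHker hL hHne
  exact ⟨fun ⟨hσ, hF⟩ => radicals_eq_range_of_le_span hsup hHalt hHker hspan hef hL hN2 hσ hF,
    fun ⟨hdim, hrad⟩ => le_span_of_radicals_eq_range hsup hHalt hHker hspan hef hL
      hdirect.submodule_iSupIndep.pairwiseDisjoint hNalt hN2 hdim hrad⟩

/-- Let `V = L₁ ⊕ ⋯ ⊕ L_m` (`dim V = 2m`, `m ≥ 2`, `K` algebraically closed of characteristic
zero), each `Lᵢ` of dimension `2`, and let `Hᵢ` be nonzero alternating forms with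
`rad(Hᵢ) ⊇ ⊕_{j≠i} Lⱼ`; set `σ = span(H₁, …, H_m)` and `Fᵢ = span(Hⱼ : j ≠ i)`. For a
`2`-dimensional subspace `N` of the space of alternating bilinear forms, the following are
equivalent: (i) `N ⊆ σ` and `N ∩ Fᵢ ∩ Fⱼ = 0` for `i ≠ j`; (ii) every nonzero `A ∈ N` has
`dim rad(A) ≤ 2` and the set of nonzero radicals of elements of `N` is `{L₁, …, L_m}`. -/
theorem statement12 (K : Type*) [Field K] [IsAlgClosed K] [CharZero K]
    (V : Type*) [AddCommGroup V] [Module K V] [FiniteDimensional K V]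
    (m : ℕ) (hm : 2 ≤ m) (hV : Module.finrank K V = 2 * m)
    (L : Fin m → Submodule K V) (hL : ∀ i, Module.finrank K (L i) = 2)
    (hdirect : DirectSum.IsInternal L)
    (H : Fin m → (V →ₗ[K] V →ₗ[K] K)) (hHne : ∀ i, H i ≠ 0)
    (hHalt : ∀ i, ∀ v, H i v v = 0)
    (hHrad : ∀ i, (⨆ (j : Fin m) (_ : j ≠ i), L j) ≤ LinearMap.ker (H i))
    (N : Submodule K (V →ₗ[K] V →ₗ[K] K))
    (hNalt : ∀ A ∈ N, ∀ v, A v v = 0) (hN2 : Module.finrank K N = 2) :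
    (N ≤ Submodule.span K (Set.range H) ∧
      ∀ i j : Fin m, i ≠ j →
        N ⊓ Submodule.span K (H '' {k | k ≠ i}) ⊓ Submodule.span K (H '' {k | k ≠ j}) = ⊥)
    ↔
    ((∀ A ∈ N, A ≠ 0 → Module.finrank K (LinearMap.ker A) ≤ 2) ∧
      {W : Submodule K V | ∃ A ∈ N, A ≠ 0 ∧ LinearMap.ker A ≠ ⊥ ∧ LinearMap.ker A = W} =
        Set.range L) :=
  statement12_general K V m L hL hdirect H hHne hHalt hHrad N hNalt hN2
end

section
/- Let V be a vector space of dimension 2m (m ≥ 2) over an algebraically closed field K of characteristic zero, and let L_1, …, L_m be 2-dimensional subspaces of V which together span V. Then there exists a 2-dimensional subspace N of the space of alternating bilinear forms on V such that every nonzero A ∈ N has dim rad(A) ≤ 2, and the set of nonzero radicals {rad(A) : A ∈ N, A ≠ 0, rad(A) ≠ 0} is exactly {L_1, …, L_m}. -/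
/-!
Since the `L i` span `V` and their dimensions add up to `dim V`, bases of them assemble to a
basis `(e_{i,0}, e_{i,1})_i` of `V`, so `V = ⊕ L i`. The form `∑ μ i • e_{i,0}^* ∧ e_{i,1}^*`
has radical `⊕_{μ i = 0} L i`. Along the pencil `μ i = x + y i` (the `i` are distinct in
characteristic zero) a nonzero member vanishes at most at one index, giving radical `0` or some
`L i`, and `μ j = j - i` vanishes exactly at `i`.
-/
open Module Submodule

section WedgeForm

variable {K V : Type*} [CommRing K] [AddCommGroup V] [Module K V]

def wedgeForm (f g : V →ₗ[K] K) : V →ₗ[K] V →ₗ[K] K := f.smulRight g - g.smulRight f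

@[simp]
lemma wedgeForm_apply (f g : V →ₗ[K] K) (v w : V) :
    wedgeForm f g v w = f v * g w - g v * f w := by
  simp [wedgeForm]

end WedgeForm

section BlockForms

variable {K V ι : Type*} [Field K] [AddCommGroup V] [Module K V] [Fintype ι]
  (b : Basis (ι × Fin 2) K V)

noncomputable def blockForms : (ι → K) →ₗ[K] V →ₗ[K] V →ₗ[K] K :=
  Fintype.linearCombination K fun i => wedgeForm (b.coord (i, 0)) (b.coord (i, 1))

lemma blockForms_apply (μ : ι → K) (v w : V) :
    blockForms b μ v w =
      ∑ i, μ i * (b.repr v (i, 0) * b.repr w (i, 1) - b.repr v (i, 1) * b.repr w (i, 0)) := by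
  simp [blockForms, Fintype.linearCombination_apply, LinearMap.sum_apply]

lemma blockForms_apply_self (μ : ι → K) (v : V) : blockForms b μ v v = 0 := by
  simp [blockForms_apply, mul_comm]

lemma blockForms_apply_basis_zero (μ : ι → K) (v : V) (i : ι) :
    blockForms b μ v (b (i, 0)) = -(μ i * b.repr v (i, 1)) := by
  classical
  simp [blockForms_apply, Finsupp.single_apply]

lemma blockForms_apply_basis_one (μ : ι → K) (v : V) (i : ι) :
    blockForms b μ v (b (i, 1)) = μ i * b.repr v (i, 0) := by
  classical
  simp [blockForms_apply, Finsupp.single_apply]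

lemma blockForms_injective : Function.Injective (blockForms b) := by
  refine (injective_iff_map_eq_zero _).2 fun μ hμ => funext fun i => ?_
  simpa [hμ] using (blockForms_apply_basis_one b μ (b (i, 0)) i).symm

lemma mem_ker_blockForms_iff (μ : ι → K) (v : V) :
    v ∈ LinearMap.ker (blockForms b μ) ↔ ∀ p : ι × Fin 2, μ p.1 ≠ 0 → b.repr v p = 0 := by
  constructor
  · rintro hv ⟨i, j⟩ hi
    have h0 := blockForms_apply_basis_zero b μ v i
    have h1 := blockForms_apply_basis_one b μ v i
    rw [LinearMap.mem_ker.1 hv] at h0 h1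
    fin_cases j
    · simpa [hi] using h1.symm
    · simpa [hi] using h0.symm
  · intro hv
    ext w
    refine (blockForms_apply b μ v w).trans (Finset.sum_eq_zero fun i _ => ?_)
    by_cases hi : μ i = 0
    · simp [hi]
    · simp [hv (i, 0) hi, hv (i, 1) hi]

lemma ker_blockForms (μ : ι → K) :
    LinearMap.ker (blockForms b μ) = span K (b '' (Prod.fst ⁻¹' {i | μ i = 0})) := by
  ext v
  rw [mem_ker_blockForms_iff, b.mem_span_image]
  refine forall_congr' fun p => ?_
  simp only [Finset.mem_coe, Finsupp.mem_support_iff, Set.mem_preimage, Set.mem_ofPred_eq]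
  tauto

end BlockForms

section SpanningSubspaces

variable {K V ι α : Type*} [Field K] [AddCommGroup V] [Module K V]
  {L : ι → Submodule K V} (v : ∀ i, Basis α K (L i))

lemma span_image_preimage_fst_eq_iSup (s : Set ι) :
    span K ((fun p : ι × α => (v p.1 p.2 : V)) '' (Prod.fst ⁻¹' s)) = ⨆ i ∈ s, L i := by
  have himage : (fun p : ι × α => (v p.1 p.2 : V)) '' (Prod.fst ⁻¹' s) =
      ⋃ i ∈ s, Set.range ((L i).subtype ∘ v i) := by
    ext x
    simp
  rw [himage, span_iUnion₂]
  simp_rw [Set.range_comp, span_image, (v _).span_eq, map_subtype_top]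

variable [Fintype ι] [Fintype α]

noncomputable def basisOfISupEqTop (hspan : ⨆ i, L i = ⊤)
    (hcard : Fintype.card ι * Fintype.card α = finrank K V) : Basis (ι × α) K V :=
  basisOfTopLeSpanOfCardEqFinrank (fun p => (v p.1 p.2 : V))
    (by
      have h := span_image_preimage_fst_eq_iSup v Set.univ
      rw [Set.preimage_univ, Set.image_univ, iSup_univ] at h
      exact (h.trans hspan).ge)
    (by rwa [Fintype.card_prod])

lemma span_basisOfISupEqTop_image (hspan : ⨆ i, L i = ⊤)
    (hcard : Fintype.card ι * Fintype.card α = finrank K V) (s : Set ι) :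
    span K (basisOfISupEqTop v hspan hcard '' (Prod.fst ⁻¹' s)) = ⨆ i ∈ s, L i := by
  rw [basisOfISupEqTop, coe_basisOfTopLeSpanOfCardEqFinrank, span_image_preimage_fst_eq_iSup]

lemma ker_blockForms_basisOfISupEqTop {L : ι → Submodule K V} (v : ∀ i, Basis (Fin 2) K (L i))
    (hspan : ⨆ i, L i = ⊤) (hcard : Fintype.card ι * Fintype.card (Fin 2) = finrank K V)
    (μ : ι → K) :
    LinearMap.ker (blockForms (basisOfISupEqTop v hspan hcard) μ) = ⨆ i ∈ {i | μ i = 0}, L i :=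
  (ker_blockForms _ μ).trans (span_basisOfISupEqTop_image v hspan hcard _)

end SpanningSubspaces

lemma biSup_eq_bot_or_exists_of_subsingleton {α ι : Type*} [CompleteLattice α] {s : Set ι}
    (hs : s.Subsingleton) (f : ι → α) : ⨆ i ∈ s, f i = ⊥ ∨ ∃ i, ⨆ j ∈ s, f j = f i := by
  rcases hs.eq_empty_or_singleton with rfl | ⟨i, rfl⟩
  · exact Or.inl iSup_emptyset
  · exact Or.inr ⟨i, iSup_singleton⟩

section AffinePencil

variable {ι K : Type*} [Field K] (t : ι → K)

noncomputable def affinePencil : K × K →ₗ[K] ι → K :=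
  (LinearMap.fst K K K).smulRight 1 + (LinearMap.snd K K K).smulRight t

@[simp]
lemma affinePencil_apply (p : K × K) (i : ι) : affinePencil t p i = p.1 + p.2 * t i := by
  simp [affinePencil]

lemma affinePencil_injective {i j : ι} (hij : t i ≠ t j) :
    Function.Injective (affinePencil t) := by
  refine (injective_iff_map_eq_zero _).2 fun ⟨x, y⟩ hp => ?_
  have hi := congrFun hp i
  have hj := congrFun hp j
  simp only [affinePencil_apply, Pi.zero_apply] at hi hj
  have hy : y = 0 := by
    have : y * (t i - t j) = 0 := by linear_combination hi - hj
    exact (mul_eq_zero.1 this).resolve_right (sub_ne_zero.2 hij)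
  simp_all

variable {t}

lemma affinePencil_zeros_subsingleton (ht : Function.Injective t) {p : K × K} (hp : p ≠ 0) :
    {i | affinePencil t p i = 0}.Subsingleton := by
  intro i hi j hj
  simp only [Set.mem_ofPred_eq, affinePencil_apply] at hi hj
  have hy : p.2 ≠ 0 := fun hy => hp (Prod.ext (by simpa [hy] using hi) hy)
  exact ht (mul_left_cancel₀ hy (by linear_combination hi - hj))

lemma affinePencil_zeros_eq_singleton (ht : Function.Injective t) (i : ι) :
    {j | affinePencil t (-t i, 1) j = 0} = {i} := by
  ext j
  simp only [Set.mem_ofPred_eq, affinePencil_apply, Set.mem_singleton_iff]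
  constructor
  · intro h
    exact ht (by linear_combination h)
  · rintro rfl
    ring

end AffinePencil

theorem statement13_general (K : Type*) [Field K] [CharZero K]
    (V : Type*) [AddCommGroup V] [Module K V]
    (m : ℕ) (hm : 2 ≤ m) (hV : Module.finrank K V = 2 * m)
    (L : Fin m → Submodule K V) (hL : ∀ i, Module.finrank K (L i) = 2)
    (hspan : ⨆ i, L i = ⊤) :
    ∃ N : Submodule K (V →ₗ[K] V →ₗ[K] K),
      (∀ A ∈ N, ∀ v, A v v = 0) ∧
      Module.finrank K N = 2 ∧
      (∀ A ∈ N, A ≠ 0 → Module.finrank K (LinearMap.ker A) ≤ 2) ∧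
      {W : Submodule K V | ∃ A ∈ N, A ≠ 0 ∧ LinearMap.ker A ≠ ⊥ ∧ LinearMap.ker A = W} =
        Set.range L := by
  let t : Fin m → K := fun i => ((i : ℕ) : K)
  have ht : Function.Injective t := Nat.cast_injective.comp Fin.val_injective
  have (i : Fin m) : Module.Finite K (L i) := Module.finite_of_finrank_eq_succ (hL i)
  let B := basisOfISupEqTop (fun i => finBasisOfFinrankEq K (L i) (hL i)) hspan
    (by simp [hV, mul_comm])
  let D := blockForms B ∘ₗ affinePencil t
  have hD : Function.Injective D := (blockForms_injective B).comp
    (affinePencil_injective t (i := ⟨0, by omega⟩) (j := ⟨1, by omega⟩) (by simp [t]))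
  have hker (p : K × K) : LinearMap.ker (D p) = ⨆ i ∈ {i | affinePencil t p i = 0}, L i :=
    ker_blockForms_basisOfISupEqTop _ _ _ _
  have hker_cases (p : K × K) (hp : D p ≠ 0) :
      LinearMap.ker (D p) = ⊥ ∨ ∃ i, LinearMap.ker (D p) = L i := by
    rw [hker]
    exact biSup_eq_bot_or_exists_of_subsingleton
      (affinePencil_zeros_subsingleton ht fun (h : p = 0) => hp (h ▸ map_zero D)) L
  have hker_eq (i : Fin m) : LinearMap.ker (D (-t i, 1)) = L i := by
    rw [hker, affinePencil_zeros_eq_singleton ht, iSup_singleton]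
  refine ⟨LinearMap.range D, ?_, ?_, ?_, ?_⟩
  · rintro _ ⟨p, rfl⟩ v
    exact blockForms_apply_self B _ v
  · rw [LinearMap.finrank_range_of_inj hD]
    simp
  · rintro _ ⟨p, rfl⟩ hp
    rcases hker_cases p hp with h | ⟨i, h⟩
    · rw [h, finrank_bot]
      exact Nat.zero_le 2
    · rw [h, hL]
  · ext W
    constructor
    · rintro ⟨_, ⟨p, rfl⟩, hp, hbot, rfl⟩
      obtain ⟨i, hi⟩ := (hker_cases p hp).resolve_left hbot
      exact ⟨i, hi.symm⟩
    · rintro ⟨i, rfl⟩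
      refine ⟨D (-t i, 1), LinearMap.mem_range_self D _, (map_ne_zero_iff D hD).2 (by simp), ?_,
        hker_eq i⟩
      rw [hker_eq, ne_eq, ← finrank_eq_zero, hL]
      exact two_ne_zero

/-- Let `V` have dimension `2m` (`m ≥ 2`) over an algebraically closed field of
characteristic zero, and let `L₁, …, L_m` be `2`-dimensional subspaces spanning `V`. Then
there is a `2`-dimensional space `N` of alternating bilinear forms on `V` such that every
nonzero `A ∈ N` has `dim rad(A) ≤ 2` and the set of nonzero radicals of elements of `N` is
exactly `{L₁, …, L_m}`. -/
theorem statement13 (K : Type*) [Field K] [IsAlgClosed K] [CharZero K]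
    (V : Type*) [AddCommGroup V] [Module K V] [FiniteDimensional K V]
    (m : ℕ) (hm : 2 ≤ m) (hV : Module.finrank K V = 2 * m)
    (L : Fin m → Submodule K V) (hL : ∀ i, Module.finrank K (L i) = 2)
    (hspan : ⨆ i, L i = ⊤) :
    ∃ N : Submodule K (V →ₗ[K] V →ₗ[K] K),
      (∀ A ∈ N, ∀ v, A v v = 0) ∧
      Module.finrank K N = 2 ∧
      (∀ A ∈ N, A ≠ 0 → Module.finrank K (LinearMap.ker A) ≤ 2) ∧
      {W : Submodule K V | ∃ A ∈ N, A ≠ 0 ∧ LinearMap.ker A ≠ ⊥ ∧ LinearMap.ker A = W} =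
        Set.range L :=
  statement13_general K V m hm hV L hL hspan
end

section
/- Let V be a vector space of dimension 4 over an algebraically closed field K of characteristic zero, and let L_1, L_2 be 2-dimensional subspaces with V = L_1 ⊕ L_2. Let H_1 be a nonzero alternating bilinear form on V with rad(H_1) = L_2 and H_2 a nonzero alternating bilinear form with rad(H_2) = L_1. Then span(H_1, H_2) is the unique 2-dimensional subspace N of the space of alternating bilinear forms on V with the property that every nonzero A ∈ N has dim rad(A) ≤ 2 and the set of nonzero radicals {rad(A) : A ∈ N, A ≠ 0, rad(A) ≠ 0} equals {L_1, L_2}. -/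
/-!
If alternating forms `H, G` have radicals spanning `V`, then `rad (H + G) = rad H ∩ rad G`: for
`v ∈ rad (H + G)` we have `H v = -G v`, so `H v` vanishes on `rad G` as well as on `rad H`.
Hence every `a • H₁ + b • H₂` with `a, b ≠ 0` is nondegenerate, and the nonzero radicals occurring
in `span(H₁, H₂)` are exactly `L₁` and `L₂`. Conversely, an alternating form whose radical contains
`L₂` is a form on the `2`-dimensional quotient `V / L₂`, so it is determined by one value and is a
multiple of `H₁`. An admissible `N` therefore contains `H₁` and `H₂`, and being `2`-dimensional it
equals their span.
-/

open LinearMap Submodule Module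

section LinearAlgebra

variable {K V W : Type*} [Field K] [AddCommGroup V] [Module K V] [AddCommGroup W] [Module K W]

theorem LinearMap.eq_zero_of_le_ker_of_apply_pair {f : V →ₗ[K] W} {L : Submodule K V}
    {e₀ e₁ : V} (hspan : L ⊔ span K {e₀, e₁} = ⊤) (hL : L ≤ ker f) (h₀ : f e₀ = 0)
    (h₁ : f e₁ = 0) : f = 0 :=
  ker_eq_top.mp <| top_unique <| hspan ▸ sup_le hL (span_le.mpr (Set.pair_subset h₀ h₁))

theorem Submodule.exists_span_pair_eq {L : Submodule K V} (hL : finrank K L = 2) :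
    ∃ e₀ e₁ : V, span K {e₀, e₁} = L := by
  have : Module.Finite K L := finite_of_finrank_eq_succ hL
  let b := finBasisOfFinrankEq K L hL
  refine ⟨b 0, b 1, ?_⟩
  have h := congrArg (map L.subtype) b.span_eq
  rw [map_span, map_top, range_subtype, ← Set.range_comp] at h
  refine Eq.trans ?_ h
  rw [← Matrix.range_cons_cons_empty _ _ ![]]
  congr 2
  ext i
  fin_cases i <;> rfl

theorem Submodule.eq_of_le_of_finrank_eq_of_pos {S N : Submodule K V} (hle : S ≤ N)
    (hd : finrank K S = finrank K N) (hN : 0 < finrank K N) : S = N :=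
  have : FiniteDimensional K N := .of_finrank_pos hN
  eq_of_le_of_finrank_eq hle hd

end LinearAlgebra

namespace LinearMap.IsAlt

section CommRing

variable {R M : Type*} [CommRing R] [AddCommGroup M] [Module R M] {H G : M →ₗ[R] M →ₗ[R] R}

theorem smul (hH : H.IsAlt) (c : R) : (c • H).IsAlt := fun v => by
  rw [smul_apply, smul_apply, hH v, smul_zero]

theorem sub (hH : H.IsAlt) (hG : G.IsAlt) : (H - G).IsAlt := fun v => by
  rw [sub_apply, sub_apply, hH v, hG v, sub_zero]

theorem ker_add_le_left (hH : H.IsAlt) (hG : G.IsAlt) (hsup : ker H ⊔ ker G = ⊤) :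
    ker (H + G) ≤ ker H := by
  intro v hv
  have hHv : H v = -G v := eq_neg_of_add_eq_zero_left hv
  rw [mem_ker, ← ker_eq_top, eq_top_iff, ← hsup]
  refine sup_le (fun w hw => ?_) (fun w hw => ?_)
  · rw [mem_ker, hH.eq_iff, mem_ker.mp hw, zero_apply]
  · rw [mem_ker, hHv, neg_apply, neg_eq_zero, hG.eq_iff, mem_ker.mp hw, zero_apply]

theorem ker_add (hH : H.IsAlt) (hG : G.IsAlt) (hsup : ker H ⊔ ker G = ⊤) :
    ker (H + G) = ker H ⊓ ker G := by
  refine le_antisymm (le_inf (ker_add_le_left hH hG hsup) ?_) fun v hv => ?_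
  · rw [add_comm]
    exact ker_add_le_left hG hH (sup_comm (ker H) (ker G) ▸ hsup)
  · rw [mem_ker, add_apply, mem_ker.mp hv.1, mem_ker.mp hv.2, add_zero]

end CommRing

variable {K V : Type*} [Field K] [AddCommGroup V] [Module K V] {A H G : V →ₗ[K] V →ₗ[K] K}

theorem ker_smul_add_smul (hH : H.IsAlt) (hG : G.IsAlt) (hsup : ker H ⊔ ker G = ⊤) (a b : K) :
    ker (a • H + b • G) = ker (a • H) ⊓ ker (b • G) :=
  ker_add (hH.smul a) (hG.smul b) <|
    top_unique <| hsup ▸ sup_le_sup (ker_le_ker_smul H a) (ker_le_ker_smul G b)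

theorem ker_eq_bot_or_of_mem_span_pair (hH : H.IsAlt) (hG : G.IsAlt)
    (hsup : ker H ⊔ ker G = ⊤) (hinf : ker H ⊓ ker G = ⊥)
    (hA : A ∈ span K {H, G}) (hA0 : A ≠ 0) :
    ker A = ⊥ ∨ ker A = ker H ∨ ker A = ker G := by
  obtain ⟨a, b, rfl⟩ := mem_span_pair.mp hA
  rw [ker_smul_add_smul hH hG hsup]
  by_cases ha : a = 0 <;> by_cases hb : b = 0
  · simp [ha, hb] at hA0
  · simp [ha, ker_smul G b hb]
  · simp [hb, ker_smul H a ha]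
  · simp [ker_smul H a ha, ker_smul G b hb, hinf]

theorem setOf_ker_span_pair (hH : H.IsAlt) (hG : G.IsAlt)
    (hsup : ker H ⊔ ker G = ⊤) (hinf : ker H ⊓ ker G = ⊥) (hH0 : H ≠ 0) (hG0 : G ≠ 0)
    (hHbot : ker H ≠ ⊥) (hGbot : ker G ≠ ⊥) :
    {W : Submodule K V | ∃ A ∈ span K {H, G}, A ≠ 0 ∧ ker A ≠ ⊥ ∧ ker A = W} =
      {ker H, ker G} := by
  ext W
  simp only [Set.mem_insert_iff, Set.mem_singleton_iff]
  constructor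
  · rintro ⟨A, hA, hA0, hbot, rfl⟩
    exact (ker_eq_bot_or_of_mem_span_pair hH hG hsup hinf hA hA0).resolve_left hbot
  · rintro (rfl | rfl)
    · exact ⟨H, subset_span (by simp), hH0, hHbot, rfl⟩
    · exact ⟨G, subset_span (by simp), hG0, hGbot, rfl⟩

theorem finrank_span_pair (hsup : ker H ⊔ ker G = ⊤) (hH0 : H ≠ 0) (hG0 : G ≠ 0) :
    finrank K (span K {H, G}) = 2 := by
  have hind : LinearIndependent K ![H, G] := by
    refine (LinearIndependent.pair_iff' (V := V →ₗ[K] V →ₗ[K] K) hH0).mpr fun a haG => hG0 ?_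
    have hker : ker H ≤ ker G := by rw [← haG]; exact ker_le_ker_smul H a
    rwa [sup_eq_right.mpr hker, ker_eq_top] at hsup
  rw [← Matrix.range_cons_cons_empty H G ![], finrank_span_eq_card hind, Fintype.card_fin]

variable {L M : Submodule K V}

theorem eq_zero_of_apply_eq_zero (hA : A.IsAlt) {e₀ e₁ : V} (hspan : L ⊔ span K {e₀, e₁} = ⊤)
    (hL : L ≤ ker A) (h : A e₀ e₁ = 0) : A = 0 := by
  have hLe : ∀ e, L ≤ ker (A e) := fun e w hw => by
    rw [mem_ker, hA.eq_iff, mem_ker.mp (hL hw), zero_apply]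
  have h₀ : A e₀ = 0 := eq_zero_of_le_ker_of_apply_pair hspan (hLe e₀) (hA e₀) h
  have h₁ : A e₁ = 0 := eq_zero_of_le_ker_of_apply_pair hspan (hLe e₁) (hA.eq_iff.mp h) (hA e₁)
  exact eq_zero_of_le_ker_of_apply_pair hspan hL h₀ h₁

theorem exists_eq_smul_of_le_ker (hLM : L ⊔ M = ⊤) (hM : finrank K M = 2) (hA : A.IsAlt)
    (hH : H.IsAlt) (hLA : L ≤ ker A) (hLH : L ≤ ker H) (hH0 : H ≠ 0) : ∃ c : K, A = c • H := by
  obtain ⟨e₀, e₁, rfl⟩ := exists_span_pair_eq hM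
  have hHe : H e₀ e₁ ≠ 0 := fun h => hH0 (hH.eq_zero_of_apply_eq_zero hLM hLH h)
  refine ⟨A e₀ e₁ / H e₀ e₁, sub_eq_zero.mp ((hA.sub (hH.smul _)).eq_zero_of_apply_eq_zero hLM
    (fun v hv => ?_) ?_)⟩
  · rw [mem_ker, sub_apply, smul_apply, mem_ker.mp (hLA hv), mem_ker.mp (hLH hv), smul_zero,
      sub_zero]
  · rw [sub_apply, sub_apply, smul_apply, smul_apply, smul_eq_mul, div_mul_cancel₀ _ hHe, sub_self]

theorem mem_of_ker_eq {N : Submodule K (V →ₗ[K] V →ₗ[K] K)} (hN : ∀ A ∈ N, A.IsAlt)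
    (hH : H.IsAlt) (hHM : ker H ⊔ M = ⊤) (hM : finrank K M = 2) (hA : A ∈ N) (hA0 : A ≠ 0)
    (hker : ker A = ker H) : H ∈ N := by
  obtain ⟨c, rfl⟩ := hH.exists_eq_smul_of_le_ker hHM hM (hN A hA) le_rfl hker.ge hA0
  exact N.smul_mem c hA

end LinearMap.IsAlt

theorem statement14_general (K : Type*) [Field K]
    (V : Type*) [AddCommGroup V] [Module K V]
    (L₁ L₂ : Submodule K V) (hL₁ : Module.finrank K L₁ = 2)
    (hL₂ : Module.finrank K L₂ = 2) (hcompl : IsCompl L₁ L₂)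
    (H₁ H₂ : V →ₗ[K] V →ₗ[K] K) (hH₁ne : H₁ ≠ 0) (hH₂ne : H₂ ≠ 0)
    (hH₁alt : ∀ v, H₁ v v = 0) (hH₂alt : ∀ v, H₂ v v = 0)
    (hH₁rad : LinearMap.ker H₁ = L₂) (hH₂rad : LinearMap.ker H₂ = L₁) :
    ∀ N : Submodule K (V →ₗ[K] V →ₗ[K] K),
      ((∀ A ∈ N, ∀ v, A v v = 0) ∧
        Module.finrank K N = 2 ∧
        (∀ A ∈ N, A ≠ 0 → Module.finrank K (LinearMap.ker A) ≤ 2) ∧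
        {W : Submodule K V | ∃ A ∈ N, A ≠ 0 ∧ LinearMap.ker A ≠ ⊥ ∧ LinearMap.ker A = W} =
          {L₁, L₂})
      ↔ N = Submodule.span K {H₁, H₂} := by
  have hsup : ker H₁ ⊔ ker H₂ = ⊤ := by rw [hH₁rad, hH₂rad]; exact hcompl.symm.sup_eq_top
  have hinf : ker H₁ ⊓ ker H₂ = ⊥ := by rw [hH₁rad, hH₂rad]; exact hcompl.symm.inf_eq_bot
  have hrank := IsAlt.finrank_span_pair hsup hH₁ne hH₂ne
  intro N
  constructor
  · rintro ⟨haltN, hdimN, -, hrad⟩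
    rw [Set.ext_iff] at hrad
    obtain ⟨A₁, hA₁N, hA₁0, -, hA₁⟩ := (hrad L₁).mpr (Set.mem_insert _ _)
    obtain ⟨A₂, hA₂N, hA₂0, -, hA₂⟩ := (hrad L₂).mpr (Set.mem_insert_of_mem _ rfl)
    have hH₁N : H₁ ∈ N := IsAlt.mem_of_ker_eq haltN hH₁alt (hH₁rad ▸ hcompl.symm.sup_eq_top) hL₁
      hA₂N hA₂0 (hA₂.trans hH₁rad.symm)
    have hH₂N : H₂ ∈ N := IsAlt.mem_of_ker_eq haltN hH₂alt (hH₂rad ▸ hcompl.sup_eq_top) hL₂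
      hA₁N hA₁0 (hA₁.trans hH₂rad.symm)
    -- elaborated without the goal as expected type: unifying the two `AddCommMonoid`
    -- structures on bilinear forms against it times out
    have hspan := eq_of_le_of_finrank_eq_of_pos (V := V →ₗ[K] V →ₗ[K] K)
      (span_le.mpr (Set.pair_subset hH₁N hH₂N)) (hrank.trans hdimN.symm) (by omega)
    exact hspan.symm
  · rintro rfl
    have hL₁0 : L₁ ≠ ⊥ := by rintro rfl; simp at hL₁
    have hL₂0 : L₂ ≠ ⊥ := by rintro rfl; simp at hL₂
    refine ⟨fun A hA v => ?_, hrank, fun A hA hA0 => ?_, ?_⟩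
    · obtain ⟨a, b, rfl⟩ := mem_span_pair.mp hA
      simp [hH₁alt v, hH₂alt v]
    · rcases IsAlt.ker_eq_bot_or_of_mem_span_pair hH₁alt hH₂alt hsup hinf hA hA0 with h | h | h
        <;> rw [h]
      · simp
      · rw [hH₁rad, hL₂]
      · rw [hH₂rad, hL₁]
    · rw [← hH₁rad, ← hH₂rad, Set.pair_comm (ker H₂)]
      exact IsAlt.setOf_ker_span_pair hH₁alt hH₂alt hsup hinf hH₁ne hH₂ne
        (hH₁rad ▸ hL₂0) (hH₂rad ▸ hL₁0)

/-- Let `V` have dimension `4` over an algebraically closed field of characteristic zero,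
`V = L₁ ⊕ L₂` with `dim Lᵢ = 2`, and let `H₁, H₂` be nonzero alternating bilinear forms with
`rad(H₁) = L₂` and `rad(H₂) = L₁`. Then `span(H₁, H₂)` is the unique `2`-dimensional space
`N` of alternating bilinear forms such that every nonzero `A ∈ N` has `dim rad(A) ≤ 2` and
the set of nonzero radicals of elements of `N` is `{L₁, L₂}`. -/
theorem statement14 (K : Type*) [Field K] [IsAlgClosed K] [CharZero K]
    (V : Type*) [AddCommGroup V] [Module K V] [FiniteDimensional K V]
    (hV : Module.finrank K V = 4)
    (L₁ L₂ : Submodule K V) (hL₁ : Module.finrank K L₁ = 2)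
    (hL₂ : Module.finrank K L₂ = 2) (hcompl : IsCompl L₁ L₂)
    (H₁ H₂ : V →ₗ[K] V →ₗ[K] K) (hH₁ne : H₁ ≠ 0) (hH₂ne : H₂ ≠ 0)
    (hH₁alt : ∀ v, H₁ v v = 0) (hH₂alt : ∀ v, H₂ v v = 0)
    (hH₁rad : LinearMap.ker H₁ = L₂) (hH₂rad : LinearMap.ker H₂ = L₁) :
    ∀ N : Submodule K (V →ₗ[K] V →ₗ[K] K),
      ((∀ A ∈ N, ∀ v, A v v = 0) ∧
        Module.finrank K N = 2 ∧
        (∀ A ∈ N, A ≠ 0 → Module.finrank K (LinearMap.ker A) ≤ 2) ∧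
        {W : Submodule K V | ∃ A ∈ N, A ≠ 0 ∧ LinearMap.ker A ≠ ⊥ ∧ LinearMap.ker A = W} =
          {L₁, L₂})
      ↔ N = Submodule.span K {H₁, H₂} :=
  statement14_general K V L₁ L₂ hL₁ hL₂ hcompl H₁ H₂ hH₁ne hH₂ne hH₁alt hH₂alt hH₁rad hH₂rad
end

section
/- Let K be a field, n = 2r+1 an odd integer with n ≥ 3, and let f_1, …, f_n ∈ K[y_0,y_1] be homogeneous forms of degree r which span the K-vector space of all homogeneous forms of degree r in K[y_0,y_1]. Then there exists an n×n skew-symmetric matrix M whose entries are homogeneous linear forms in K[y_0,y_1] such that: (1) M · (f_1, …, f_n)ᵀ = 0 as an identity of vectors of polynomials; and (2) for every (a,b) ∈ K² with (a,b) ≠ (0,0), the evaluated matrix M(a,b) over K has rank exactly n-1 (so its kernel is spanned by (f_1(a,b), …, f_n(a,b)), which is a nonzero vector). -/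
/-!
The forms of degree `r` are spanned by the monomials `mᵢ = y₀^(r-i) y₁^i`, whose linear
syzygies `y₁ mᵢ - y₀ mᵢ₊₁ = 0` are the rows of an `r × (r+1)` matrix `T`. The skew matrix
`S = [[0, Tᵀ], [-T, 0]]` of linear forms kills `(m, 0)`, and at a point `(a, b) ≠ 0` its kernel
is the line through `(m(a,b), 0)`: a vector in `ker T(a,b)` is determined by its first coordinate
if `a ≠ 0` and by its last one if `b ≠ 0`, so `ker T(a,b)` is spanned by `m(a,b)`, `T(a,b)` has
rank `r` and `Tᵀ(a,b)` is injective. As `f` and `(m, 0)` span the same space, `Fᵀ f = (m, 0)` for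
an invertible constant matrix `F`, and the congruent matrix `M = F S Fᵀ` does the job.
-/

open Matrix MvPolynomial

open Module LinearMap in
theorem exists_linearEquiv_comp_eq {K V E E' : Type*} [Field K] [AddCommGroup V] [Module K V]
    [AddCommGroup E] [Module K E] [AddCommGroup E'] [Module K E'] [FiniteDimensional K E]
    [FiniteDimensional K E'] (φ : E →ₗ[K] V) (ψ : E' →ₗ[K] V)
    (hdim : finrank K E' = finrank K E) (hrange : range φ = range ψ) :
    ∃ e : E' ≃ₗ[K] E, φ ∘ₗ e = ψ := by
  obtain ⟨s, hs⟩ := φ.rangeRestrict.exists_rightInverse_of_surjective φ.range_rangeRestrict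
  obtain ⟨π, hπ⟩ := (ker ψ).subtype.exists_leftInverse_of_injective (ker ψ).ker_subtype
  have hker : finrank K (ker ψ) = finrank K (ker φ) := by
    have hφ := φ.finrank_range_add_finrank_ker
    have hψ := ψ.finrank_range_add_finrank_ker
    rw [hrange] at hφ
    omega
  -- `α` lifts `ψ` through `φ` and maps `ker ψ` isomorphically onto `ker φ`, so it is injective
  let α : E' →ₗ[K] E := s ∘ₗ ψ.codRestrict (range φ) (fun x => hrange ▸ mem_range_self ψ x) +
    (ker φ).subtype ∘ₗ (LinearEquiv.ofFinrankEq _ _ hker).toLinearMap ∘ₗ π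
  have hφs (y : range φ) : φ (s y) = y := congrArg Subtype.val (LinearMap.congr_fun hs y)
  have hα : φ ∘ₗ α = ψ := by
    ext x
    simp [α, hφs]
  have hinj : Function.Injective α := by
    rw [← ker_eq_bot, Submodule.eq_bot_iff]
    intro x hx
    have hψx : ψ x = 0 := by rw [← hα, LinearMap.comp_apply, mem_ker.mp hx, map_zero]
    have hπx : π x = ⟨x, hψx⟩ := LinearMap.congr_fun hπ ⟨x, hψx⟩
    have hαx : α x = LinearEquiv.ofFinrankEq _ _ hker ⟨x, hψx⟩ := by
      have : ψ.codRestrict (range φ) (fun x => hrange ▸ mem_range_self ψ x) x = 0 :=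
        Subtype.ext hψx
      simp [α, this, hπx]
    have h0 : LinearEquiv.ofFinrankEq _ _ hker ⟨x, hψx⟩ = 0 :=
      Subtype.ext (hαx.symm.trans (mem_ker.mp hx))
    simpa using congrArg Subtype.val ((LinearEquiv.map_eq_zero_iff _).mp h0)
  exact ⟨α.linearEquivOfInjective hinj hdim, hα⟩

theorem exists_mul_eq_one_transpose_mulVec_eq_of_span_eq {K A ι κ : Type*} [Field K]
    [CommRing A] [Algebra K A] [Fintype ι] [Fintype κ] [DecidableEq ι] [DecidableEq κ]
    {f : ι → A} {g : κ → A} (hcard : Fintype.card κ = Fintype.card ι)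
    (hspan : Submodule.span K (Set.range f) = Submodule.span K (Set.range g)) :
    ∃ (F : Matrix ι κ K) (G : Matrix κ ι K),
      G * F = 1 ∧ F * G = 1 ∧ (F.map (algebraMap K A))ᵀ *ᵥ f = g := by
  obtain ⟨e, he⟩ := exists_linearEquiv_comp_eq (Fintype.linearCombination K f)
    (Fintype.linearCombination K g) (by simpa using hcard)
    (by rw [Fintype.range_linearCombination, Fintype.range_linearCombination, hspan])
  refine ⟨LinearMap.toMatrix' e.toLinearMap, LinearMap.toMatrix' e.symm.toLinearMap,
    by simp [← LinearMap.toMatrix'_comp], by simp [← LinearMap.toMatrix'_comp], funext fun k => ?_⟩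
  have := LinearMap.congr_fun he (Pi.single k 1)
  rw [LinearMap.comp_apply, Fintype.linearCombination_apply_single, one_smul,
    Fintype.linearCombination_apply] at this
  simpa only [mulVec, dotProduct, transpose_apply, map_apply, LinearMap.toMatrix'_apply,
    ← Algebra.smul_def] using this

theorem ker_mul_mul_transpose_eq_span_singleton {R ι κ : Type*} [CommRing R] [Fintype ι]
    [Fintype κ] [DecidableEq ι] [DecidableEq κ] {F : Matrix ι κ R} {G : Matrix κ ι R} (hGF : G * F = 1)
    (hFG : F * G = 1) (S : Matrix κ κ R) (x : ι → R)
    (hS : LinearMap.ker S.mulVecLin = R ∙ (Fᵀ *ᵥ x)) :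
    LinearMap.ker (F * S * Fᵀ).mulVecLin = R ∙ x := by
  have hF : LinearMap.ker F.mulVecLin = ⊥ := LinearMap.ker_eq_bot_of_injective <|
    Function.LeftInverse.injective (g := G.mulVec) fun y => by
      rw [mulVecLin_apply, mulVec_mulVec, hGF, one_mulVec]
  have hFt : Function.Injective Fᵀ.mulVecLin :=
    Function.LeftInverse.injective (g := Gᵀ.mulVec) fun y => by
      rw [mulVecLin_apply, mulVec_mulVec, ← transpose_mul, hFG, transpose_one, one_mulVec]
  rw [mulVecLin_mul, mulVecLin_mul, LinearMap.ker_comp, LinearMap.ker_comp_of_ker_eq_bot _ hF,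
    hS, ← mulVecLin_apply, ← Set.image_singleton, Submodule.span_image,
    Submodule.comap_map_eq_of_injective hFt]

theorem rank_add_one_of_ker_eq_span_singleton {K n : Type*} [Field K] [Fintype n]
    {A : Matrix n n K} {x : n → K} (hx : x ≠ 0) (hA : LinearMap.ker A.mulVecLin = K ∙ x) :
    A.rank + 1 = Fintype.card n := by
  have := LinearMap.finrank_range_add_finrank_ker A.mulVecLin
  rwa [hA, finrank_span_singleton hx, Module.finrank_fintype_fun_eq_card] at this

theorem map_algebraMap_mul_mul_transpose_apply_mem {K A ι κ : Type*} [CommRing K] [CommRing A]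
    [Algebra K A] [Fintype κ] (F : Matrix ι κ K) {S : Matrix κ κ A} {W : Submodule K A}
    (hS : ∀ k l, S k l ∈ W) (i j : ι) :
    (F.map (algebraMap K A) * S * (F.map (algebraMap K A))ᵀ) i j ∈ W := by
  simp only [mul_apply, map_apply, transpose_apply, ← Algebra.smul_def,
    mul_comm _ (algebraMap K A _)]
  exact W.sum_mem fun l _ => W.smul_mem _ (W.sum_mem fun k _ => W.smul_mem _ (hS k l))

section Syzygy

variable {R : Type*} [CommRing R] (r : ℕ)

def monomialVector (u v : R) : Fin (r + 1) → R := fun i => u ^ (r - i) * v ^ (i : ℕ)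

def monomialSyzygyMatrix (u v : R) : Matrix (Fin r) (Fin (r + 1)) R :=
  Matrix.of fun j => Pi.single j.castSucc v - Pi.single j.succ u

def skewSyzygyMatrix (u v : R) : Matrix (Fin (r + 1) ⊕ Fin r) (Fin (r + 1) ⊕ Fin r) R :=
  fromBlocks 0 (monomialSyzygyMatrix r u v)ᵀ (-monomialSyzygyMatrix r u v) 0

def paddedMonomialVector (u v : R) : Fin (r + 1) ⊕ Fin r → R :=
  Sum.elim (monomialVector r u v) 0

variable {r}

theorem monomialSyzygyMatrix_mulVec_apply (u v : R) (y : Fin (r + 1) → R) (j : Fin r) :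
    (monomialSyzygyMatrix r u v *ᵥ y) j = v * y j.castSucc - u * y j.succ := by
  change (Pi.single j.castSucc v - Pi.single j.succ u) ⬝ᵥ y = _
  rw [sub_dotProduct, single_dotProduct, single_dotProduct]

theorem monomialSyzygyMatrix_mulVec_monomialVector (u v : R) :
    monomialSyzygyMatrix r u v *ᵥ monomialVector r u v = 0 := by
  ext j
  have hj : r - j = r - (j + 1) + 1 := by omega
  simp only [monomialSyzygyMatrix_mulVec_apply, monomialVector, Fin.val_castSucc, Fin.val_succ,
    hj, Pi.zero_apply]
  ring

theorem skewSyzygyMatrix_transpose (u v : R) :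
    (skewSyzygyMatrix r u v)ᵀ = -skewSyzygyMatrix r u v := by
  simp [skewSyzygyMatrix, fromBlocks_transpose, fromBlocks_neg]

theorem skewSyzygyMatrix_mulVec_paddedMonomialVector (u v : R) :
    skewSyzygyMatrix r u v *ᵥ paddedMonomialVector r u v = 0 := by
  simp [skewSyzygyMatrix, paddedMonomialVector, fromBlocks_mulVec, neg_mulVec,
    monomialSyzygyMatrix_mulVec_monomialVector]

theorem skewSyzygyMatrix_map {S : Type*} [CommRing S] (φ : R →+* S) (u v : R) :
    (skewSyzygyMatrix r u v).map φ = skewSyzygyMatrix r (φ u) (φ v) := by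
  have hT : (monomialSyzygyMatrix r u v).map φ = monomialSyzygyMatrix r (φ u) (φ v) := by
    ext j i
    simp [monomialSyzygyMatrix, Pi.single_apply, apply_ite φ]
  simp only [skewSyzygyMatrix, fromBlocks_map, Matrix.map_zero _ (map_zero φ), transpose_map, hT,
    Matrix.map_neg _ (map_neg φ)]

theorem paddedMonomialVector_map {S : Type*} [CommRing S] (φ : R →+* S) (u v : R) :
    φ ∘ paddedMonomialVector r u v = paddedMonomialVector r (φ u) (φ v) := by
  ext (i | j) <;> simp [paddedMonomialVector, monomialVector]

theorem skewSyzygyMatrix_apply_mem {S : Type*} [SetLike S R] [AddSubgroupClass S R] {W : S}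
    {u v : R} (hu : u ∈ W) (hv : v ∈ W) (k l : Fin (r + 1) ⊕ Fin r) :
    skewSyzygyMatrix r u v k l ∈ W := by
  have hT : ∀ j i, monomialSyzygyMatrix r u v j i ∈ W := fun j i => by
    simp only [monomialSyzygyMatrix, of_apply, Pi.sub_apply, Pi.single_apply]
    split_ifs <;> simp [hu, hv, sub_mem, zero_mem]
  rcases k with k | k <;> rcases l with l | l <;>
    simp [skewSyzygyMatrix, hT, zero_mem]

theorem eq_zero_of_monomialSyzygyMatrix_mulVec_of_apply_zero [IsDomain R] {u v : R} (hu : u ≠ 0)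
    {y : Fin (r + 1) → R} (hy : monomialSyzygyMatrix r u v *ᵥ y = 0) (h0 : y 0 = 0) : y = 0 := by
  funext i
  show y i = 0
  induction i using Fin.induction with
  | zero => exact h0
  | succ j ih =>
    have hj := congrFun hy j
    rw [monomialSyzygyMatrix_mulVec_apply, ih, mul_zero, zero_sub, Pi.zero_apply,
      neg_eq_zero] at hj
    exact (mul_eq_zero.mp hj).resolve_left hu

theorem eq_zero_of_monomialSyzygyMatrix_mulVec_of_apply_last [IsDomain R] {u v : R} (hv : v ≠ 0)
    {y : Fin (r + 1) → R} (hy : monomialSyzygyMatrix r u v *ᵥ y = 0) (hlast : y (Fin.last r) = 0) :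
    y = 0 := by
  funext i
  show y i = 0
  induction i using Fin.reverseInduction with
  | last => exact hlast
  | cast j ih =>
    have hj := congrFun hy j
    rw [monomialSyzygyMatrix_mulVec_apply, ih, mul_zero, sub_zero, Pi.zero_apply] at hj
    exact (mul_eq_zero.mp hj).resolve_left hv

theorem monomialVector_apply_zero (u v : R) : monomialVector r u v 0 = u ^ r := by
  simp [monomialVector]

theorem monomialVector_apply_last (u v : R) : monomialVector r u v (Fin.last r) = v ^ r := by
  simp [monomialVector]

end Syzygy

section SyzygyKernel

variable {K : Type*} [Field K] {r : ℕ} {u v : K}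

theorem ker_monomialSyzygyMatrix (huv : ¬(u = 0 ∧ v = 0)) :
    LinearMap.ker (monomialSyzygyMatrix r u v).mulVecLin = K ∙ monomialVector r u v := by
  refine le_antisymm (fun y hy => ?_) ?_
  · rw [LinearMap.mem_ker, mulVecLin_apply] at hy
    rw [Submodule.mem_span_singleton]
    suffices key : ∀ i, monomialVector r u v i ≠ 0 →
        (∀ z, monomialSyzygyMatrix r u v *ᵥ z = 0 → z i = 0 → z = 0) →
        ∃ c : K, c • monomialVector r u v = y by
      by_cases hu : u = 0
      · have hv : v ≠ 0 := fun hv => huv ⟨hu, hv⟩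
        exact key (Fin.last r) (by simp [monomialVector_apply_last, hv])
          fun z => eq_zero_of_monomialSyzygyMatrix_mulVec_of_apply_last hv
      · exact key 0 (by simp [monomialVector_apply_zero, hu])
          fun z => eq_zero_of_monomialSyzygyMatrix_mulVec_of_apply_zero hu
    intro i hi hdet
    refine ⟨y i / monomialVector r u v i, (sub_eq_zero.mp (hdet _ ?_ ?_)).symm⟩
    · rw [mulVec_sub, mulVec_smul, hy, monomialSyzygyMatrix_mulVec_monomialVector, smul_zero,
        sub_zero]
    · simp [hi]
  · rw [Submodule.span_singleton_le_iff_mem, LinearMap.mem_ker, mulVecLin_apply,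
      monomialSyzygyMatrix_mulVec_monomialVector]

theorem monomialVector_ne_zero (huv : ¬(u = 0 ∧ v = 0)) : monomialVector r u v ≠ 0 := by
  intro h
  by_cases hu : u = 0
  · have := congrFun h (Fin.last r)
    rw [monomialVector_apply_last, Pi.zero_apply] at this
    exact huv ⟨hu, pow_eq_zero_iff'.mp this |>.1⟩
  · have := congrFun h 0
    rw [monomialVector_apply_zero, Pi.zero_apply] at this
    exact hu (pow_eq_zero_iff'.mp this).1

theorem ker_transpose_monomialSyzygyMatrix (huv : ¬(u = 0 ∧ v = 0)) :
    LinearMap.ker (monomialSyzygyMatrix r u v)ᵀ.mulVecLin = ⊥ := by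
  have hT := LinearMap.finrank_range_add_finrank_ker (monomialSyzygyMatrix r u v).mulVecLin
  have hTt := LinearMap.finrank_range_add_finrank_ker (monomialSyzygyMatrix r u v)ᵀ.mulVecLin
  have hrank := rank_transpose (monomialSyzygyMatrix r u v)
  rw [ker_monomialSyzygyMatrix huv, finrank_span_singleton (monomialVector_ne_zero huv)] at hT
  simp only [Matrix.rank, Module.finrank_fin_fun] at hT hTt hrank
  exact Submodule.finrank_eq_zero.mp (by omega)

theorem paddedMonomialVector_ne_zero (huv : ¬(u = 0 ∧ v = 0)) :
    paddedMonomialVector r u v ≠ 0 := fun h =>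
  monomialVector_ne_zero huv (funext fun i => congrFun h (Sum.inl i))

theorem ker_skewSyzygyMatrix (huv : ¬(u = 0 ∧ v = 0)) :
    LinearMap.ker (skewSyzygyMatrix r u v).mulVecLin = K ∙ paddedMonomialVector r u v := by
  refine le_antisymm (fun x hx => ?_) ?_
  · rw [LinearMap.mem_ker, mulVecLin_apply, skewSyzygyMatrix, fromBlocks_mulVec] at hx
    have hl : x ∘ Sum.inl ∈ LinearMap.ker (monomialSyzygyMatrix r u v).mulVecLin := by
      ext j
      simpa [neg_mulVec] using congrFun hx (Sum.inr j)
    have hr : x ∘ Sum.inr ∈ LinearMap.ker (monomialSyzygyMatrix r u v)ᵀ.mulVecLin := by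
      rw [LinearMap.mem_ker, mulVecLin_apply]
      ext i
      simpa using congrFun hx (Sum.inl i)
    rw [ker_monomialSyzygyMatrix huv, Submodule.mem_span_singleton] at hl
    rw [ker_transpose_monomialSyzygyMatrix huv, Submodule.mem_bot] at hr
    obtain ⟨c, hc⟩ := hl
    refine Submodule.mem_span_singleton.mpr ⟨c, ?_⟩
    ext (i | j)
    · simpa [paddedMonomialVector] using congrFun hc i
    · simpa [paddedMonomialVector] using (congrFun hr j).symm
  · rw [Submodule.span_singleton_le_iff_mem, LinearMap.mem_ker, mulVecLin_apply,
      skewSyzygyMatrix_mulVec_paddedMonomialVector]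

end SyzygyKernel

section Span

variable {K : Type*} [CommRing K] (r : ℕ)

theorem span_range_monomialVector :
    Submodule.span K (Set.range (monomialVector r (X 0 : MvPolynomial (Fin 2) K) (X 1))) =
      homogeneousSubmodule (Fin 2) K r := by
  have hmon (d : Fin 2 →₀ ℕ) : monomial d (1 : K) = X 0 ^ d 0 * X 1 ^ d 1 := by
    simp [monomial_eq, Finsupp.prod_fintype]
  simp only [homogeneousSubmodule_eq_finsupp_supported, AddMonoidAlgebra.supported_eq_span_single,
    MvPolynomial.single_eq_monomial]
  congr 1
  ext p
  simp only [Set.mem_range, Set.mem_image, Set.mem_ofPred_eq, hmon, Finsupp.degree_eq_sum,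
    Fin.sum_univ_two]
  constructor
  · rintro ⟨i, rfl⟩
    refine ⟨Finsupp.single (0 : Fin 2) (r - i) + Finsupp.single (1 : Fin 2) (i : ℕ), ?_, ?_⟩
    · simpa using Nat.sub_add_cancel (Nat.lt_succ_iff.mp i.2)
    · simp [monomialVector]
  · rintro ⟨d, hd, rfl⟩
    refine ⟨⟨d 1, by omega⟩, ?_⟩
    simp [monomialVector, ← hd]

theorem span_range_paddedMonomialVector :
    Submodule.span K (Set.range (paddedMonomialVector r (X 0 : MvPolynomial (Fin 2) K) (X 1))) =
      homogeneousSubmodule (Fin 2) K r := by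
  rw [paddedMonomialVector, Set.Sum.elim_range, Submodule.span_union, span_range_monomialVector,
    Submodule.span_eq_bot.mpr (by simp), sup_bot_eq]

end Span

theorem statement15_general (K : Type*) [Field K] (r : ℕ)
    (f : Fin (2 * r + 1) → MvPolynomial (Fin 2) K)
    (hfspan : Submodule.span K (Set.range f) = MvPolynomial.homogeneousSubmodule (Fin 2) K r) :
    ∃ M : Matrix (Fin (2 * r + 1)) (Fin (2 * r + 1)) (MvPolynomial (Fin 2) K),
      M.transpose = -M ∧
      (∀ p q, (M p q).IsHomogeneous 1) ∧
      M.mulVec f = 0 ∧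
      ∀ a b : K, ¬(a = 0 ∧ b = 0) →
        ((M.map (MvPolynomial.eval ![a, b])).rank = 2 * r ∧
        (fun p : Fin (2 * r + 1) => MvPolynomial.eval ![a, b] (f p)) ≠ 0 ∧
        LinearMap.ker (M.map (MvPolynomial.eval ![a, b])).mulVecLin =
          Submodule.span K {fun p : Fin (2 * r + 1) => MvPolynomial.eval ![a, b] (f p)}) := by
  obtain ⟨F, G, hGF, hFG, hg⟩ := exists_mul_eq_one_transpose_mulVec_eq_of_span_eq
    (f := f) (g := paddedMonomialVector r (X 0 : MvPolynomial (Fin 2) K) (X 1))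
    (by simp only [Fintype.card_sum, Fintype.card_fin]; omega)
    (by rw [hfspan, span_range_paddedMonomialVector])
  set P := F.map (algebraMap K (MvPolynomial (Fin 2) K))
  refine ⟨P * skewSyzygyMatrix r (X 0 : MvPolynomial (Fin 2) K) (X 1) * Pᵀ, ?_, fun p q => ?_, ?_,
    fun a b hab => ?_⟩
  · rw [transpose_mul, transpose_mul, transpose_transpose, skewSyzygyMatrix_transpose,
      Matrix.neg_mul, Matrix.mul_neg, Matrix.mul_assoc]
  · exact map_algebraMap_mul_mul_transpose_apply_mem F
      (skewSyzygyMatrix_apply_mem (W := homogeneousSubmodule (Fin 2) K 1)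
        (isHomogeneous_X K 0) (isHomogeneous_X K 1)) p q
  · rw [← mulVec_mulVec, hg, ← mulVec_mulVec, skewSyzygyMatrix_mulVec_paddedMonomialVector,
      mulVec_zero]
  · set x := fun p => eval ![a, b] (f p)
    have hP : P.map (eval ![a, b]) = F := by ext; simp [P]
    have hx : Fᵀ *ᵥ x = paddedMonomialVector r a b := by
      funext k
      have := congrArg (eval ![a, b]) (congrFun hg k)
      rwa [RingHom.map_mulVec, transpose_map, hP, ← Function.comp_apply (f := eval ![a, b]),
        paddedMonomialVector_map, eval_X, eval_X] at this
    have hker := ker_mul_mul_transpose_eq_span_singleton hGF hFG _ x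
      (by rw [hx, ker_skewSyzygyMatrix hab])
    have hx0 : x ≠ 0 := fun h => paddedMonomialVector_ne_zero hab (by rw [← hx, h, mulVec_zero])
    have hrank := rank_add_one_of_ker_eq_span_singleton hx0 hker
    simp only [Matrix.map_mul, transpose_map, hP, skewSyzygyMatrix_map, eval_X, cons_val_zero,
      cons_val_one]
    exact ⟨by simp only [Fintype.card_fin] at hrank; omega, hx0, hker⟩

/-- Let `n = 2r+1 ≥ 3` be odd and let `f₁, …, f_n ∈ K[y₀,y₁]` be homogeneous forms of degree
`r` spanning the space of all degree-`r` forms. Then there is an `n × n` skew-symmetric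
matrix `M` of homogeneous linear forms with `M · (f₁, …, f_n)ᵀ = 0`, and such that for every
`(a,b) ≠ (0,0)` the evaluated matrix `M(a,b)` has rank exactly `n - 1 = 2r`, with kernel
spanned by the nonzero vector `(f₁(a,b), …, f_n(a,b))`. -/
theorem statement15 (K : Type*) [Field K] (r : ℕ) (hr : 1 ≤ r)
    (f : Fin (2 * r + 1) → MvPolynomial (Fin 2) K)
    (hfhom : ∀ p, (f p).IsHomogeneous r)
    (hfspan : Submodule.span K (Set.range f) = MvPolynomial.homogeneousSubmodule (Fin 2) K r) :
    ∃ M : Matrix (Fin (2 * r + 1)) (Fin (2 * r + 1)) (MvPolynomial (Fin 2) K),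
      M.transpose = -M ∧
      (∀ p q, (M p q).IsHomogeneous 1) ∧
      M.mulVec f = 0 ∧
      ∀ a b : K, ¬(a = 0 ∧ b = 0) →
        ((M.map (MvPolynomial.eval ![a, b])).rank = 2 * r ∧
        (fun p : Fin (2 * r + 1) => MvPolynomial.eval ![a, b] (f p)) ≠ 0 ∧
        LinearMap.ker (M.map (MvPolynomial.eval ![a, b])).mulVecLin =
          Submodule.span K {fun p : Fin (2 * r + 1) => MvPolynomial.eval ![a, b] (f p)}) :=
  statement15_general K r f hfspan
end
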